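/- arXiv:2209.08140 — 9 statements merged into one kernel-verified Lean document; each statement's English description precedes it below -/
import Mathlib

section
/- Let X be a Polish space and let F : C_b(X) → ℝ be a convex nondecreasing function. Then F is continuous for the supremum norm on C_b(X); more precisely, for all f, g ∈ C_b(X) and ε > 0, if ‖f − g‖∞ ≤ ε then |F(f) − F(g)| ≤ F(f + ε) − F(f − ε), and F(f + ε) − F(f − ε) → 0 as ε → 0. -/
open Filter Topology BoundedContinuousFunction Set

/-!
Along the line `t ↦ f + t` through `f` in the direction of the constant function `1`, `F` is a
convex function of one real variable, hence continuous, so `F (f + ε) - F (f - ε) → 0`. If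
`‖f - g‖ ≤ ε` then `f` and `g` both lie in the order interval `[f - ε, f + ε]`, on which the
monotone `F` varies by at most `F (f + ε) - F (f - ε)`; this modulus gives continuity of `F`.
-/

theorem ConvexOn.continuous_apply_add_smul {E : Type*} [AddCommGroup E] [Module ℝ E]
    {F : E → ℝ} (hF : ConvexOn ℝ univ F) (f e : E) :
    Continuous fun t : ℝ => F (f + t • e) := by
  have hline : ConvexOn ℝ univ fun t : ℝ => F (f + t • e) :=
    (hF.translate_right f).comp_linearMap (LinearMap.id.smulRight e)
  exact continuousOn_univ.1 (hline.continuousOn isOpen_univ)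

theorem ConvexOn.tendsto_sub_add_smul_sub_smul {E : Type*} [AddCommGroup E] [Module ℝ E]
    {F : E → ℝ} (hF : ConvexOn ℝ univ F) (f e : E) :
    Tendsto (fun ε : ℝ => F (f + ε • e) - F (f - ε • e)) (𝓝 0) (𝓝 0) := by
  have hcont := hF.continuous_apply_add_smul f e
  have hsym : Continuous fun ε : ℝ => F (f + ε • e) - F (f + (-ε) • e) :=
    hcont.sub (hcont.comp continuous_neg)
  simpa [← sub_eq_add_neg] using hsym.tendsto 0

theorem Monotone.abs_sub_le_of_mem_Icc {E : Type*} [Preorder E] {F : E → ℝ} (hF : Monotone F)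
    {a b f g : E} (hf : f ∈ Icc a b) (hg : g ∈ Icc a b) : |F f - F g| ≤ F b - F a := by
  rw [← Real.dist_eq]
  exact Real.dist_le_of_mem_Icc ⟨hF hf.1, hF hf.2⟩ ⟨hF hg.1, hF hg.2⟩

theorem continuous_of_forall_abs_sub_le {E : Type*} [PseudoMetricSpace E] {F : E → ℝ}
    (ω : E → ℝ → ℝ) (hω : ∀ f, Tendsto (ω f) (𝓝[>] 0) (𝓝 0))
    (hF : ∀ f g ε, 0 < ε → dist g f ≤ ε → |F f - F g| ≤ ω f ε) : Continuous F := by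
  refine Metric.continuous_iff.2 fun f δ hδ => ?_
  obtain ⟨ε, hωε, hε⟩ :=
    (((hω f).eventually (gt_mem_nhds hδ)).and self_mem_nhdsWithin).exists
  refine ⟨ε, hε, fun g hg => ?_⟩
  rw [Real.dist_eq, abs_sub_comm]
  exact (hF f g ε hε hg.le).trans_lt hωε

namespace BoundedContinuousFunction

variable {X : Type*} [TopologicalSpace X]

theorem smul_const_one (ε : ℝ) : ε • const X 1 = const X ε := by
  ext
  simp

theorem mem_Icc_of_norm_sub_le {f g : X →ᵇ ℝ} {ε : ℝ} (h : ‖f - g‖ ≤ ε) :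
    g ∈ Icc (f - const X ε) (f + const X ε) := by
  have hx : ∀ x, |f x - g x| ≤ ε := fun x => by
    simpa using (norm_coe_le_norm (f - g) x).trans h
  refine ⟨fun x => ?_, fun x => ?_⟩ <;>
    simp only [ContinuousMap.toFun_eq_coe, coe_toContinuousMap, coe_sub, coe_add, const_apply,
      Pi.sub_apply, Pi.add_apply] <;>
    linarith [abs_le.1 (hx x)]

end BoundedContinuousFunction

theorem stmt0_general {X : Type*} [TopologicalSpace X]
    (F : (X →ᵇ ℝ) → ℝ) (hconv : ConvexOn ℝ Set.univ F) (hmono : Monotone F) :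
    Continuous F ∧
    (∀ (f g : X →ᵇ ℝ) (ε : ℝ), 0 < ε → ‖f - g‖ ≤ ε →
      |F f - F g| ≤ F (f + const X ε) - F (f - const X ε)) ∧
    (∀ f : X →ᵇ ℝ,
      Tendsto (fun ε : ℝ => F (f + const X ε) - F (f - const X ε)) (𝓝[>] (0 : ℝ)) (𝓝 0)) := by
  have hmodulus : ∀ (f g : X →ᵇ ℝ) (ε : ℝ), 0 < ε → ‖f - g‖ ≤ ε →
      |F f - F g| ≤ F (f + const X ε) - F (f - const X ε) := fun f g ε hε h =>
    hmono.abs_sub_le_of_mem_Icc (mem_Icc_of_norm_sub_le (by simpa using hε.le))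
      (mem_Icc_of_norm_sub_le h)
  have hlim : ∀ f : X →ᵇ ℝ,
      Tendsto (fun ε : ℝ => F (f + const X ε) - F (f - const X ε)) (𝓝[>] 0) (𝓝 0) := by
    intro f
    simpa only [smul_const_one] using
      (hconv.tendsto_sub_add_smul_sub_smul f (const X 1)).mono_left nhdsWithin_le_nhds
  refine ⟨continuous_of_forall_abs_sub_le _ hlim fun f g ε hε h => ?_, hmodulus, hlim⟩
  exact hmodulus f g ε hε (by rwa [dist_eq_norm'] at h)

/-- A convex nondecreasing function `F : C_b(X) → ℝ` on a Polish space `X` is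
continuous for the supremum norm; more precisely, if `‖f - g‖ ≤ ε` then
`|F f - F g| ≤ F (f + ε) - F (f - ε)`, and `F (f + ε) - F (f - ε) → 0` as `ε → 0⁺`. -/
theorem stmt0 {X : Type*} [TopologicalSpace X] [PolishSpace X]
    (F : (X →ᵇ ℝ) → ℝ) (hconv : ConvexOn ℝ Set.univ F) (hmono : Monotone F) :
    Continuous F ∧
    (∀ (f g : X →ᵇ ℝ) (ε : ℝ), 0 < ε → ‖f - g‖ ≤ ε →
      |F f - F g| ≤ F (f + const X ε) - F (f - const X ε)) ∧
    (∀ f : X →ᵇ ℝ,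
      Tendsto (fun ε : ℝ => F (f + const X ε) - F (f - const X ε)) (𝓝[>] (0 : ℝ)) (𝓝 0)) :=
  stmt0_general F hconv hmono
end

section
/- Let X be a Polish space and let F : C_b(X) → ℝ be a convex nondecreasing function. If F is downward continuous, then F is upward continuous. -/
open Filter Topology BoundedContinuousFunction

/-!
If `g n ↑ f`, then the reflected sequence `2 f - g n` decreases to `f`, so downward continuity
gives `F (2 f - g n) → F f`. Since `f` is the midpoint of `g n` and `2 f - g n`, convexity yields
`2 F f - F (2 f - g n) ≤ F (g n)`, while monotonicity yields `F (g n) ≤ F f`; squeeze.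
-/

theorem ConvexOn.two_mul_le_add_sub_add {𝕜 E : Type*} [Field 𝕜] [LinearOrder 𝕜]
    [IsStrictOrderedRing 𝕜] [AddCommGroup E] [Module 𝕜 E] {s : Set E} {F : E → 𝕜}
    (hF : ConvexOn 𝕜 s F) {x d : E} (hsub : x - d ∈ s) (hadd : x + d ∈ s) :
    2 * F x ≤ F (x - d) + F (x + d) := by
  have hmid : (1 / 2 : 𝕜) • (x - d) + (1 / 2 : 𝕜) • (x + d) = x := by
    rw [← smul_add, sub_add_add_cancel, ← two_smul 𝕜 x, smul_smul]
    norm_num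
  have h := hF.2 hsub hadd (by norm_num : (0 : 𝕜) ≤ 1 / 2) (by norm_num : (0 : 𝕜) ≤ 1 / 2)
    (by norm_num)
  rw [hmid, smul_eq_mul, smul_eq_mul] at h
  linarith

theorem ConvexOn.tendsto_of_le_of_tendsto_reflect {ι E : Type*} [AddCommGroup E] [Preorder E]
    [Module ℝ E] {F : E → ℝ} (hconv : ConvexOn ℝ Set.univ F) (hmono : Monotone F)
    {l : Filter ι} {f : E} {g : ι → E} (hle : ∀ i, g i ≤ f)
    (hreflect : Tendsto (fun i => F (f + (f - g i))) l (𝓝 (F f))) :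
    Tendsto (fun i => F (g i)) l (𝓝 (F f)) := by
  have hlower : ∀ i, 2 * F f - F (f + (f - g i)) ≤ F (g i) := fun i => by
    have := hconv.two_mul_le_add_sub_add (x := f) (d := f - g i) (Set.mem_univ _)
      (Set.mem_univ _)
    rw [sub_sub_cancel] at this
    linarith
  have hlim : Tendsto (fun i => 2 * F f - F (f + (f - g i))) l (𝓝 (F f)) := by
    simpa [two_mul] using (tendsto_const_nhds (x := 2 * F f)).sub hreflect
  exact tendsto_of_tendsto_of_tendsto_of_le_of_le hlim tendsto_const_nhds hlower
    fun i => hmono (hle i)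

namespace BoundedContinuousFunction

variable {X : Type*} [TopologicalSpace X] {f : X →ᵇ ℝ} {g : ℕ → X →ᵇ ℝ}

theorem le_of_monotone_of_tendsto_apply (hg : Monotone g)
    (hlim : ∀ x, Tendsto (fun n => g n x) atTop (𝓝 (f x))) (n : ℕ) : g n ≤ f :=
  fun x => Monotone.ge_of_tendsto (f := fun n => g n x) (fun _ _ hab => hg hab x) (hlim x) n

theorem antitone_reflect (hg : Monotone g) : Antitone fun n => f + (f - g n) :=
  fun _ _ hnm => add_le_add_right (sub_le_sub_left (hg hnm) f) f

theorem tendsto_reflect_apply (hlim : ∀ x, Tendsto (fun n => g n x) atTop (𝓝 (f x))) (x : X) :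
    Tendsto (fun n => (f + (f - g n)) x) atTop (𝓝 (f x)) := by
  simpa using (tendsto_const_nhds (x := f x)).add (tendsto_const_nhds.sub (hlim x))

end BoundedContinuousFunction

theorem stmt1_general {X : Type*} [TopologicalSpace X]
    (F : (X →ᵇ ℝ) → ℝ) (hconv : ConvexOn ℝ Set.univ F) (hmono : Monotone F)
    (hdown : ∀ (f : X →ᵇ ℝ) (g : ℕ → X →ᵇ ℝ), Antitone g →
      (∀ x, Tendsto (fun n => g n x) atTop (𝓝 (f x))) →
      Tendsto (fun n => F (g n)) atTop (𝓝 (F f))) :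
    ∀ (f : X →ᵇ ℝ) (g : ℕ → X →ᵇ ℝ), Monotone g →
      (∀ x, Tendsto (fun n => g n x) atTop (𝓝 (f x))) →
      Tendsto (fun n => F (g n)) atTop (𝓝 (F f)) := by
  intro f g hg hlim
  exact hconv.tendsto_of_le_of_tendsto_reflect hmono (le_of_monotone_of_tendsto_apply hg hlim)
    (hdown f _ (antitone_reflect hg) (tendsto_reflect_apply hlim))

/-- For a convex nondecreasing `F : C_b(X) → ℝ` on a Polish space,
downward continuity implies upward continuity. -/
theorem stmt1 {X : Type*} [TopologicalSpace X] [PolishSpace X]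
    (F : (X →ᵇ ℝ) → ℝ) (hconv : ConvexOn ℝ Set.univ F) (hmono : Monotone F)
    (hdown : ∀ (f : X →ᵇ ℝ) (g : ℕ → X →ᵇ ℝ), Antitone g →
      (∀ x, Tendsto (fun n => g n x) atTop (𝓝 (f x))) →
      Tendsto (fun n => F (g n)) atTop (𝓝 (F f))) :
    ∀ (f : X →ᵇ ℝ) (g : ℕ → X →ᵇ ℝ), Monotone g →
      (∀ x, Tendsto (fun n => g n x) atTop (𝓝 (f x))) →
      Tendsto (fun n => F (g n)) atTop (𝓝 (F f)) :=
  stmt1_general F hconv hmono hdown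
end

section
/- Let X be a Polish space and let F : C_b(X) → ℝ be a convex nondecreasing upward continuous function with F(0) = 0. If (f_n) is a uniformly bounded sequence in C_b(X) converging pointwise on X to some f ∈ C_b(X), then F(f) ≤ liminf_n F(f_n). -/
/-!
Pass to a subsequence along which `F (g n) < b < F f`. Upward continuity makes `F` tight: there
is a compact `K` such that `F h` is nearly `F f` whenever `h` is bounded below and `f - δ < h` on
`K` (cut `f` down to a fixed lower bound away from finitely many balls at every scale `1/(k+1)`,
losing at most `ε / 2 ^ (k+1)` of `F` at scale `k`). On the compact `K`, bounded pointwise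
convergence implies weak convergence in `C(K)`: a positive functional is integration against a
finite measure (Riesz–Markov–Kakutani), and dominated convergence applies. Separating `0` from the
upward closure of `f - convexHull {g n}` forces the separating functional to be positive, so some
convex combination `h` of the `g n` satisfies `f - δ ≤ h` on `K`. Then tightness gives `b < F h`,
while convexity gives `F h ≤ F (g n) < b` for some `n`.
-/

open Filter Topology BoundedContinuousFunction MeasureTheory Metric TopologicalSpace

def UpwardContinuous {X : Type*} [TopologicalSpace X] (Φ : (X →ᵇ ℝ) → ℝ) : Prop :=
  ∀ (f : X →ᵇ ℝ) (g : ℕ → X →ᵇ ℝ), Monotone g →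
    (∀ x, Tendsto (fun n => g n x) atTop (𝓝 (f x))) → Tendsto (fun n => Φ (g n)) atTop (𝓝 (Φ f))

namespace BoundedContinuousFunction

theorem nonneg_of_lt_of_add_nonneg_mem {X : Type*} [TopologicalSpace X]
    (L : (X →ᵇ ℝ) →ₗ[ℝ] ℝ) {S : Set (X →ᵇ ℝ)} {w₀ : X →ᵇ ℝ} (hw₀ : w₀ ∈ S)
    (hS : ∀ w ∈ S, ∀ r, 0 ≤ r → w + r ∈ S) {u : ℝ} (hu : ∀ w ∈ S, u < L w) {r : X →ᵇ ℝ}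
    (hr : 0 ≤ r) : 0 ≤ L r := by
  by_contra! hLr
  set t := (L w₀ - u) / -L r
  have ht : t * L r = u - L w₀ := by
    simp only [t]
    field_simp [hLr.ne]
    ring
  have htr : 0 ≤ t • r := fun x =>
    mul_nonneg (div_nonneg (by linarith [hu w₀ hw₀]) (by linarith)) (hr x)
  have := hu _ (hS _ hw₀ _ htr)
  rw [map_add, map_smul, smul_eq_mul] at this
  linarith

section CompactSpace

variable {K : Type*} [TopologicalSpace K] [CompactSpace K] [T2Space K]

theorem exists_isFiniteMeasure_eq_integral [MeasurableSpace K] [BorelSpace K]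
    (L : (K →ᵇ ℝ) →ₗ[ℝ] ℝ) (hL : ∀ q, 0 ≤ q → 0 ≤ L q) :
    ∃ μ : Measure K, IsFiniteMeasure μ ∧ ∀ q, L q = ∫ x, q x ∂μ := by
  let Λ : CompactlySupportedContinuousMap K ℝ →ₚ[ℝ] ℝ :=
    { toFun q := L q.toBoundedContinuousFunction
      map_add' q q' := by rw [← map_add]; rfl
      map_smul' c q := by rw [← map_smul]; rfl
      monotone' q q' hqq' := by
        rw [← sub_nonneg, ← map_sub]
        exact hL _ fun x => sub_nonneg.2 (hqq' x) }
  refine ⟨RealRMK.rieszMeasure Λ, inferInstance, fun q => ?_⟩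
  exact (RealRMK.integral_rieszMeasure Λ (.continuousMapEquiv q.toContinuousMap)).symm

theorem tendsto_of_nonneg_of_tendsto_pointwise (L : (K →ᵇ ℝ) →ₗ[ℝ] ℝ)
    (hL : ∀ q, 0 ≤ q → 0 ≤ L q) {p : ℕ → K →ᵇ ℝ} {q : K →ᵇ ℝ} {C : ℝ}
    (hC : ∀ n, ‖p n‖ ≤ C) (hlim : ∀ x, Tendsto (fun n => p n x) atTop (𝓝 (q x))) :
    Tendsto (fun n => L (p n)) atTop (𝓝 (L q)) := by
  borelize K
  obtain ⟨μ, _, hLμ⟩ := exists_isFiniteMeasure_eq_integral L hL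
  simp only [hLμ]
  refine tendsto_integral_of_dominated_convergence (fun _ => C)
    (fun n => (p n).continuous.aestronglyMeasurable) (integrable_const C)
    (fun n => .of_forall fun x => (p n).norm_coe_le_norm x |>.trans (hC n)) (.of_forall hlim)

theorem exists_mem_convexHull_sub_const_le {p : ℕ → K →ᵇ ℝ} {q : K →ᵇ ℝ} {C : ℝ}
    (hC : ∀ n, ‖p n‖ ≤ C) (hlim : ∀ x, Tendsto (fun n => p n x) atTop (𝓝 (q x)))
    {δ : ℝ} (hδ : 0 < δ) : ∃ v ∈ convexHull ℝ (Set.range p), q - const K δ ≤ v := by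
  by_contra! hfar
  set S : Set (K →ᵇ ℝ) := {w | ∃ v ∈ convexHull ℝ (Set.range p), q - v ≤ w}
  have hS_add : ∀ w ∈ S, ∀ r, 0 ≤ r → w + r ∈ S := fun w ⟨v, hv, hvw⟩ r hr =>
    ⟨v, hv, le_add_of_le_of_nonneg hvw hr⟩
  have hS_convex : Convex ℝ S := by
    rintro w₁ ⟨v₁, hv₁, hw₁⟩ w₂ ⟨v₂, hv₂, hw₂⟩ a b ha hb hab
    refine ⟨a • v₁ + b • v₂, convex_convexHull ℝ _ hv₁ hv₂ ha hb hab, fun x => ?_⟩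
    have h₁ : q x - v₁ x ≤ w₁ x := hw₁ x
    have h₂ : q x - v₂ x ≤ w₂ x := hw₂ x
    change q x - (a * v₁ x + b * v₂ x) ≤ a * w₁ x + b * w₂ x
    have : q x = a * q x + b * q x := by rw [← add_mul, hab, one_mul]
    nlinarith
  have hS_norm : ∀ w ∈ S, δ ≤ ‖w‖ := by
    rintro w ⟨v, hv, hvw⟩
    obtain ⟨x, hx⟩ : ∃ x, v x < q x - δ := by
      by_contra! hle
      exact hfar v hv fun x => (hle x : q x - δ ≤ v x)
    have hx' : q x - v x ≤ w x := hvw x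
    linarith [(le_abs_self (w x)).trans (w.norm_coe_le_norm x)]
  have h0 : (0 : K →ᵇ ℝ) ∉ closure S := fun h0 => by
    have : δ ≤ ‖(0 : K →ᵇ ℝ)‖ :=
      closure_minimal hS_norm (isClosed_le continuous_const continuous_norm) h0
    rw [norm_zero] at this
    linarith
  obtain ⟨L, u, hu, hLS⟩ := geometric_hahn_banach_point_closed hS_convex.closure isClosed_closure h0
  rw [map_zero] at hu
  have hmem : ∀ n, q - p n ∈ S := fun n => ⟨p n, subset_convexHull ℝ _ ⟨n, rfl⟩, le_rfl⟩
  have hL_nonneg : ∀ r, 0 ≤ r → 0 ≤ L r := fun r hr =>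
    nonneg_of_lt_of_add_nonneg_mem L.toLinearMap (hmem 0) hS_add
      (fun w hw => hLS w (subset_closure hw)) hr
  have hlimL := tendsto_of_nonneg_of_tendsto_pointwise L.toLinearMap hL_nonneg
    (p := fun n => q - p n) (q := 0) (C := ‖q‖ + C)
    (fun n => (norm_sub_le _ _).trans (by linarith [hC n]))
    (fun x => by simpa using (hlim x).const_sub (q x))
  have := ge_of_tendsto hlimL (.of_forall fun n => (hLS _ (subset_closure (hmem n))).le)
  simp only [map_zero] at this
  linarith

end CompactSpace

theorem _root_.IsCompact.exists_mem_convexHull_forall_sub_le {X : Type*} [TopologicalSpace X]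
    [T2Space X] {K : Set X} (hK : IsCompact K) {g : ℕ → X →ᵇ ℝ} {f : X →ᵇ ℝ} {C : ℝ}
    (hC : ∀ n, ‖g n‖ ≤ C) (hlim : ∀ x ∈ K, Tendsto (fun n => g n x) atTop (𝓝 (f x)))
    {δ : ℝ} (hδ : 0 < δ) : ∃ h ∈ convexHull ℝ (Set.range g), ∀ x ∈ K, f x - δ ≤ h x := by
  have := isCompact_iff_compactSpace.1 hK
  let R : (X →ᵇ ℝ) →ₗ[ℝ] (K →ᵇ ℝ) :=
    (compContinuousCLM ℝ ℝ ⟨Subtype.val, continuous_subtype_val⟩).toLinearMap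
  obtain ⟨v, hv, hfv⟩ := exists_mem_convexHull_sub_const_le (p := R ∘ g) (q := R f)
    (fun n => (norm_compContinuous_le _ _).trans (hC n)) (fun x => hlim x x.2) hδ
  rw [Set.range_comp, ← R.image_convexHull] at hv
  obtain ⟨h, hh, rfl⟩ := hv
  exact ⟨h, hh, fun x hx => hfv ⟨x, hx⟩⟩

theorem exists_cutoff_seq {X : Type*} [PseudoMetricSpace X] [SeparableSpace X] [Nonempty X]
    {r : ℝ} (hr : 0 < r) :
    ∃ χ : ℕ → X →ᵇ ℝ, Monotone χ ∧ (∀ m, 0 ≤ χ m ∧ χ m ≤ 1) ∧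
      (∀ x, Tendsto (fun m => χ m x) atTop (𝓝 1)) ∧
      ∀ m, ∃ t : Set X, t.Finite ∧ tsupport (χ m) ⊆ ⋃ y ∈ t, ball y r := by
  set P : ℕ → Set X := fun m => denseSeq X '' Set.Iic m
  have hP : ∀ m, (P m).Nonempty := fun m => ⟨_, 0, Nat.zero_le m, rfl⟩
  have hle_one : ∀ m x, max 0 (1 - 2 * infDist x (P m) / r) ≤ 1 := fun m x =>
    max_le zero_le_one (sub_le_self _ (div_nonneg (mul_nonneg zero_le_two infDist_nonneg) hr.le))
  let χ : ℕ → X →ᵇ ℝ := fun m => .ofNormedAddCommGroup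
    (fun x => max 0 (1 - 2 * infDist x (P m) / r)) (by fun_prop) 1 fun x => by
      rw [Real.norm_of_nonneg (le_max_left _ _)]
      exact hle_one m x
  have hχ : ∀ m x, χ m x = max 0 (1 - 2 * infDist x (P m) / r) := fun _ _ => rfl
  refine ⟨χ, fun m m' hm x => ?_, fun m => ⟨fun x => le_max_left _ _, hle_one m⟩, fun x => ?_,
    fun m => ⟨P m, (Set.finite_Iic m).image _, ?_⟩⟩
  · have : infDist x (P m') ≤ infDist x (P m) :=
      infDist_le_infDist_of_subset (Set.image_mono (Set.Iic_subset_Iic.2 hm)) (hP m)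
    change χ m x ≤ χ m' x
    rw [hχ, hχ]
    gcongr
  · have hdist : Tendsto (fun m => infDist x (P m)) atTop (𝓝 0) := by
      refine Metric.tendsto_atTop.2 fun ε hε => ?_
      obtain ⟨i, hi⟩ := (denseRange_denseSeq X).exists_dist_lt x hε
      refine ⟨i, fun m hm => ?_⟩
      rw [Real.dist_0_eq_abs, abs_of_nonneg infDist_nonneg]
      exact (infDist_le_dist_of_mem (Set.mem_image_of_mem _ (Set.mem_Iic.2 hm))).trans_lt hi
    simpa [hχ] using
      tendsto_const_nhds (x := (0 : ℝ)) |>.max (((hdist.const_mul 2).div_const r).const_sub 1)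
  · refine (closure_minimal (s := Function.support (χ m)) (t := {x | infDist x (P m) ≤ r / 2})
      (fun x hx => ?_) (isClosed_le (continuous_infDist_pt _) continuous_const)).trans
      fun x hx => ?_
    · by_contra hlt
      have hlt : r / 2 < infDist x (P m) := not_le.1 hlt
      apply hx
      rw [hχ]
      refine max_eq_left ?_
      rw [sub_nonpos, le_div_iff₀ hr]
      linarith
    · obtain ⟨y, hy, hxy⟩ := (infDist_lt_iff (hP m)).1 (hx.trans_lt (half_lt_self hr))
      exact Set.mem_biUnion hy hxy

end BoundedContinuousFunction

section FiniteCover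

variable {X : Type*} [MetricSpace X] {C : ℕ → Set X}

theorem totallyBounded_iInter_of_finite_cover
    (hcov : ∀ r > 0, ∃ J, ∃ t : Set X, t.Finite ∧ C J ⊆ ⋃ y ∈ t, ball y r) :
    TotallyBounded (⋂ J, C J) :=
  totallyBounded_iff.2 fun r hr =>
    let ⟨J, t, ht, hJ⟩ := hcov r hr
    ⟨t, ht, (Set.iInter_subset _ J).trans hJ⟩

theorem exists_subset_of_iInter_subset_of_finite_cover [CompleteSpace X] (hC : Antitone C)
    (hcl : ∀ J, IsClosed (C J))
    (hcov : ∀ r > 0, ∃ J, ∃ t : Set X, t.Finite ∧ C J ⊆ ⋃ y ∈ t, ball y r)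
    {U : Set X} (hU : IsOpen U) (hCU : ⋂ J, C J ⊆ U) : ∃ J, C J ⊆ U := by
  by_contra! hout
  choose x hxC hxU using fun J => Set.not_subset.1 (hout J)
  have htb : TotallyBounded (Set.range x) := by
    refine totallyBounded_iff.2 fun r hr => ?_
    obtain ⟨J, t, ht, hJ⟩ := hcov r hr
    refine ⟨t ∪ x '' Set.Iio J, ht.union ((Set.finite_Iio J).image x), ?_⟩
    rintro _ ⟨j, rfl⟩
    rcases lt_or_ge j J with hj | hj
    · exact Set.mem_biUnion (Or.inr (Set.mem_image_of_mem x hj)) (mem_ball_self hr)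
    · obtain ⟨y, hy, hxy⟩ := Set.mem_iUnion₂.1 (hJ (hC hj (hxC j)))
      exact Set.mem_biUnion (Or.inl hy) hxy
  obtain ⟨z, -, φ, hφ, hlim⟩ := (htb.closure.isCompact_of_isClosed isClosed_closure).tendsto_subseq
    fun n => subset_closure (Set.mem_range_self n)
  have hz : ∀ J, z ∈ C J \ U := fun J => ((hcl J).sdiff hU).mem_of_tendsto hlim
    (eventually_atTop.2 ⟨J, fun n hn => ⟨hC (hn.trans hφ.le_apply) (hxC _), hxU _⟩⟩)
  exact (hz 0).2 (hCU (Set.mem_iInter.2 fun J => (hz J).1))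

end FiniteCover

theorem UpwardContinuous.exists_seq_inf_cutoff {X : Type*} [TopologicalSpace X]
    {Φ : (X →ᵇ ℝ) → ℝ} (hΦ : UpwardContinuous Φ) {χ : ℕ → ℕ → X →ᵇ ℝ}
    (hχ_mono : ∀ k, Monotone (χ k)) (hχ_lim : ∀ k x, Tendsto (fun m => χ k m x) atTop (𝓝 1))
    {ε : ℝ} (hε : 0 < ε) :
    ∃ (c : ℕ → X →ᵇ ℝ) (m : ℕ → ℕ), c 0 = 1 ∧ (∀ k, c (k + 1) = c k ⊓ χ k (m k)) ∧
      ∀ J, Φ 1 - ε ≤ Φ (c J) := by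
  -- Working with `c ⊓ 1` lets `M` be chosen for all `c` at once; along the recursion `c ≤ 1`.
  have hstep : ∀ k (c : X →ᵇ ℝ), ∃ m, Φ (c ⊓ 1) - ε / 2 ^ (k + 1) < Φ (c ⊓ χ k m) := by
    intro k c
    have := hΦ (c ⊓ 1) (fun m => c ⊓ χ k m) (fun m m' h => inf_le_inf_left c (hχ_mono k h))
      (fun x => tendsto_const_nhds.min (hχ_lim k x))
    exact (this.eventually (eventually_gt_nhds (sub_lt_self _ (by positivity)))).exists
  choose M hM using hstep
  let c : ℕ → X →ᵇ ℝ := fun J => Nat.rec 1 (fun k c => c ⊓ χ k (M k c)) J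
  have hc_succ : ∀ k, c (k + 1) = c k ⊓ χ k (M k (c k)) := fun _ => rfl
  have hc_le_one : ∀ J, c J ≤ 1 := by
    intro J
    induction J with
    | zero => exact le_rfl
    | succ k ih => exact (hc_succ k).trans_le (inf_le_left.trans ih)
  have hc_Φ : ∀ J, Φ 1 - ε + ε / 2 ^ J ≤ Φ (c J) := by
    intro J
    induction J with
    | zero => simp [c]
    | succ k ih =>
      have := hM k (c k)
      rw [inf_eq_left.2 (hc_le_one k), ← hc_succ] at this
      have : ε / 2 ^ (k + 1) = ε / 2 ^ k - ε / 2 ^ (k + 1) := by ring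
      linarith
  exact ⟨c, fun k => M k (c k), rfl, hc_succ, fun J => by
    linarith [hc_Φ J, show 0 < ε / 2 ^ J by positivity]⟩

theorem UpwardContinuous.exists_isCompact_forall_isOpen {X : Type*} [MetricSpace X]
    [CompleteSpace X] [SeparableSpace X] {Φ : (X →ᵇ ℝ) → ℝ} (hΦ : UpwardContinuous Φ)
    {ε : ℝ} (hε : 0 < ε) :
    ∃ K, IsCompact K ∧ ∀ U, IsOpen U → K ⊆ U →
      ∃ c : X →ᵇ ℝ, 0 ≤ c ∧ c ≤ 1 ∧ (∀ x ∉ U, c x = 0) ∧ Φ 1 - ε ≤ Φ c := by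
  rcases isEmpty_or_nonempty X with hX | hX
  · exact ⟨∅, isCompact_empty, fun U _ _ =>
      ⟨1, fun _ => zero_le_one, le_rfl, fun x => isEmptyElim x, by linarith⟩⟩
  choose χ hχ_mono hχ_bound hχ_lim hχ_cover using fun k : ℕ =>
    exists_cutoff_seq (X := X) (Nat.one_div_pos_of_nat (n := k))
  obtain ⟨c, m, hc_zero, hc_succ, hc_Φ⟩ := hΦ.exists_seq_inf_cutoff hχ_mono hχ_lim hε
  have hc_anti : Antitone c := antitone_nat_of_succ_le fun k => (hc_succ k).trans_le inf_le_left
  have hc_nonneg : ∀ J, 0 ≤ c J := by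
    intro J
    induction J with
    | zero => exact hc_zero ▸ fun _ => zero_le_one
    | succ k ih => exact (hc_succ k).symm ▸ le_inf ih (hχ_bound _ _).1
  set C : ℕ → Set X := fun J => ⋂ k < J, tsupport (χ k (m k))
  have hc_eq_zero : ∀ J, ∀ x ∉ C J, c J x = 0 := by
    intro J x hx
    obtain ⟨k, hk, hxk⟩ : ∃ k < J, x ∉ tsupport (χ k (m k)) := by simpa [C] using hx
    have h1 : c J x ≤ χ k (m k) x :=
      (hc_anti (Nat.succ_le_of_lt hk)).trans ((hc_succ k).trans_le inf_le_right) x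
    rw [image_eq_zero_of_notMem_tsupport hxk] at h1
    exact le_antisymm h1 (hc_nonneg J x)
  have hC_anti : Antitone C := fun J J' h =>
    Set.biInter_mono (fun k hk => lt_of_lt_of_le hk h) fun _ _ => le_rfl
  have hC_closed : ∀ J, IsClosed (C J) := fun J => isClosed_biInter fun k _ => isClosed_tsupport _
  have hcov : ∀ r > 0, ∃ J, ∃ t : Set X, t.Finite ∧ C J ⊆ ⋃ y ∈ t, ball y r := by
    intro r hr
    obtain ⟨k, hk⟩ := exists_nat_one_div_lt hr
    obtain ⟨t, ht, hNt⟩ := hχ_cover k (m k)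
    refine ⟨k + 1, t, ht, (Set.iInter₂_subset k (Nat.lt_succ_self k)).trans (hNt.trans ?_)⟩
    exact Set.iUnion₂_mono fun y _ => ball_subset_ball hk.le
  refine ⟨⋂ J, C J, (totallyBounded_iInter_of_finite_cover hcov).isCompact_of_isClosed
    (isClosed_iInter hC_closed), fun U hU hKU => ?_⟩
  obtain ⟨J, hJ⟩ := exists_subset_of_iInter_subset_of_finite_cover hC_anti hC_closed hcov hU hKU
  exact ⟨c J, hc_nonneg J, hc_zero ▸ hc_anti (Nat.zero_le J),
    fun x hx => hc_eq_zero J x fun h => hx (hJ h), hc_Φ J⟩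

theorem UpwardContinuous.exists_isCompact_le_of_forall_lt {X : Type*} [MetricSpace X]
    [CompleteSpace X] [SeparableSpace X] {F : (X →ᵇ ℝ) → ℝ} (hmono : Monotone F)
    (hup : UpwardContinuous F) {f : X →ᵇ ℝ} {a : ℝ} (haf : ∀ x, a ≤ f x) {ε : ℝ} (hε : 0 < ε) :
    ∃ K, IsCompact K ∧ ∀ h : X →ᵇ ℝ, (∀ x, a ≤ h x) → (∀ x ∈ K, f x < h x) → F f - ε ≤ F h := by
  set Φ : (X →ᵇ ℝ) → ℝ := fun c => F (const X a + (f - const X a) * c)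
  have hΦ : UpwardContinuous Φ := by
    refine fun c χ hχ hlim => hup _ _ (fun m m' h x => ?_)
      (fun x => tendsto_const_nhds.add (tendsto_const_nhds.mul (hlim x)))
    change a + (f x - a) * χ m x ≤ a + (f x - a) * χ m' x
    gcongr
    · exact sub_nonneg.2 (haf x)
    · exact hχ h x
  obtain ⟨K, hK, hKU⟩ := hΦ.exists_isCompact_forall_isOpen hε
  refine ⟨K, hK, fun h ha hKh => ?_⟩
  obtain ⟨c, hc0, hc1, hcU, hΦc⟩ := hKU {x | f x < h x} (isOpen_lt f.continuous h.continuous) hKh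
  have hΦ1 : Φ 1 = F f := by
    simp only [Φ, mul_one, add_sub_cancel]
  refine (hΦ1 ▸ hΦc).trans (hmono fun x => ?_)
  change a + (f x - a) * c x ≤ h x
  by_cases hx : f x < h x
  · have hcx : c x ≤ 1 := hc1 x
    nlinarith [haf x]
  · rw [hcU x hx, mul_zero, add_zero]
    exact ha x

theorem UpwardContinuous.exists_lt_sub_const {X : Type*} [TopologicalSpace X]
    {F : (X →ᵇ ℝ) → ℝ} (hup : UpwardContinuous F) (f : X →ᵇ ℝ) {ε : ℝ} (hε : 0 < ε) :
    ∃ δ > 0, F f - ε < F (f - const X δ) := by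
  have := hup f (fun n => f - const X (1 / ((n : ℝ) + 1)))
    (fun m n h x => sub_le_sub_left (Nat.one_div_le_one_div h) (f x))
    (fun x => by simpa using tendsto_one_div_add_atTop_nhds_zero_nat.const_sub (f x))
  obtain ⟨n, hn⟩ := (this.eventually (eventually_gt_nhds (sub_lt_self _ hε))).exists
  exact ⟨_, Nat.one_div_pos_of_nat, hn⟩

theorem UpwardContinuous.exists_mem_convexHull_le_of_tendsto {X : Type*} [MetricSpace X]
    [CompleteSpace X] [SeparableSpace X] {F : (X →ᵇ ℝ) → ℝ} (hmono : Monotone F)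
    (hup : UpwardContinuous F) {f : X →ᵇ ℝ} {g : ℕ → X →ᵇ ℝ} {C : ℝ} (hC : ∀ n, ‖g n‖ ≤ C)
    (hlim : ∀ x, Tendsto (fun n => g n x) atTop (𝓝 (f x))) {ε : ℝ} (hε : 0 < ε) :
    ∃ h ∈ convexHull ℝ (Set.range g), F f - ε ≤ F h := by
  obtain ⟨δ, hδ, hFδ⟩ := hup.exists_lt_sub_const f (half_pos hε)
  have hg_ge : ∀ n x, -C ≤ g n x := fun n x =>
    neg_le_of_abs_le (((g n).norm_coe_le_norm x).trans (hC n))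
  have hf_ge : ∀ x, -C ≤ f x := fun x => ge_of_tendsto' (hlim x) fun n => hg_ge n x
  obtain ⟨K, hK, hKF⟩ := hup.exists_isCompact_le_of_forall_lt hmono (f := f - const X δ)
    (a := -C - δ) (fun x => by simp; linarith [hf_ge x]) (half_pos hε)
  obtain ⟨h, hh, hhK⟩ := hK.exists_mem_convexHull_forall_sub_le hC (fun x _ => hlim x)
    (half_pos hδ)
  have hh_ge : ∀ x, -C ≤ h x := by
    have : h ∈ ⋂ x, {w : X →ᵇ ℝ | -C ≤ w x} :=
      convexHull_min (by rintro _ ⟨n, rfl⟩; exact Set.mem_iInter.2 (hg_ge n))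
        (convex_iInter fun x => convex_halfSpace_ge (evalCLM ℝ x).isLinear (-C)) hh
    simpa using this
  refine ⟨h, hh, ?_⟩
  have := hKF h (fun x => by linarith [hh_ge x])
    (fun x hx => by simp; linarith [hhK x hx])
  linarith

theorem stmt7_general {X : Type*} [TopologicalSpace X] [PolishSpace X]
    (F : (X →ᵇ ℝ) → ℝ) (hconv : ConvexOn ℝ Set.univ F) (hmono : Monotone F)
    (hup : ∀ (f : X →ᵇ ℝ) (g : ℕ → X →ᵇ ℝ), Monotone g →
      (∀ x, Tendsto (fun n => g n x) atTop (𝓝 (f x))) →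
      Tendsto (fun n => F (g n)) atTop (𝓝 (F f)))
    (f : X →ᵇ ℝ) (g : ℕ → X →ᵇ ℝ) (C : ℝ) (hbdd : ∀ n, ‖g n‖ ≤ C)
    (hlim : ∀ x, Tendsto (fun n => g n x) atTop (𝓝 (f x))) :
    F f ≤ liminf (fun n => F (g n)) atTop := by
  by_contra! hlt
  obtain ⟨b, hb, hbf⟩ := exists_between hlt
  have hF_bdd : IsBoundedUnder (· ≤ ·) atTop fun n => F (g n) :=
    isBoundedUnder_of ⟨F (const X C), fun n => hmono fun x =>
      (le_abs_self _).trans (((g n).norm_coe_le_norm x).trans (hbdd n))⟩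
  obtain ⟨φ, hφ, hφb⟩ :=
    extraction_of_frequently_atTop (frequently_lt_of_liminf_lt hF_bdd.isCoboundedUnder_ge hb)
  let := upgradeIsCompletelyMetrizable X
  obtain ⟨h, hh, hFh⟩ := UpwardContinuous.exists_mem_convexHull_le_of_tendsto hmono hup
    (g := g ∘ φ) (fun n => hbdd (φ n)) (fun x => (hlim x).comp hφ.tendsto_atTop) (sub_pos.2 hbf)
  obtain ⟨_, ⟨n, rfl⟩, hhn⟩ := hconv.exists_ge_of_mem_convexHull (Set.subset_univ _) hh
  linarith [hhn.trans_lt (hφb n)]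

/-- For a convex nondecreasing upward continuous `F : C_b(X) → ℝ` with `F 0 = 0`
on a Polish space, if `(f_n)` is uniformly bounded and converges pointwise to `f ∈ C_b(X)`,
then `F(f) ≤ liminf F(f_n)`. -/
theorem stmt7 {X : Type*} [TopologicalSpace X] [PolishSpace X]
    (F : (X →ᵇ ℝ) → ℝ) (hconv : ConvexOn ℝ Set.univ F) (hmono : Monotone F)
    (hF0 : F 0 = 0)
    (hup : ∀ (f : X →ᵇ ℝ) (g : ℕ → X →ᵇ ℝ), Monotone g →
      (∀ x, Tendsto (fun n => g n x) atTop (𝓝 (f x))) →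
      Tendsto (fun n => F (g n)) atTop (𝓝 (F f)))
    (f : X →ᵇ ℝ) (g : ℕ → X →ᵇ ℝ) (C : ℝ) (hbdd : ∀ n, ‖g n‖ ≤ C)
    (hlim : ∀ x, Tendsto (fun n => g n x) atTop (𝓝 (f x))) :
    F f ≤ liminf (fun n => F (g n)) atTop :=
  stmt7_general F hconv hmono hup f g C hbdd hlim
end

section
/- Let X be a Polish space and let F : C_b(X) → ℝ be a convex nondecreasing function with F(0) = 0. If F is downward continuous at 0, i.e., for every sequence h_n ∈ C_b(X) with h_n ↓ 0 pointwise on X one has F(h_n) ↓ 0, then F is downward continuous at every f ∈ C_b(X): for every f ∈ C_b(X) and every sequence h_n ∈ C_b(X) with h_n ↓ 0 pointwise, F(f + h_n) ↓ F(f). Consequently, a nondecreasing convex function that is downward continuous at one point is downward continuous at all points. -/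
open Filter Topology BoundedContinuousFunction

/-!
Write `f + k = (1 - 2t) f + t (2f - f₀) + t (f₀ + t⁻¹ k)`. For `h_n ↓ 0` the sequence `t⁻¹ h_n`
also decreases to `0`, so convexity and downward continuity at `f₀` give
`limsup F (f + h_n) ≤ F f + t (F (2f - f₀) + F f₀ - 2 F f)` for every small `t > 0`; letting
`t → 0` bounds the limsup by `F f`, while monotonicity bounds every term from below by `F f`.
-/

def DownwardContinuousAt {X : Type*} [TopologicalSpace X] (F : (X →ᵇ ℝ) → ℝ)
    (f : X →ᵇ ℝ) : Prop :=
  ∀ h : ℕ → X →ᵇ ℝ, Antitone h → (∀ x, Tendsto (fun n => h n x) atTop (𝓝 (0 : ℝ))) →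
    Tendsto (fun n => F (f + h n)) atTop (𝓝 (F f))

theorem ConvexOn.map_add_le_three_point {E : Type*} [AddCommGroup E] [Module ℝ E]
    {F : E → ℝ} (hF : ConvexOn ℝ Set.univ F) (f f₀ k : E) {t : ℝ} (ht : 0 < t)
    (ht' : 2 * t ≤ 1) :
    F (f + k) ≤ F f + t * (F (2 • f - f₀) + F f₀ - 2 * F f) + t * (F (f₀ + t⁻¹ • k) - F f₀) := by
  have hjensen := hF.map_sum_le (t := Finset.univ) (w := ![1 - 2 * t, t, t])
    (p := ![f, 2 • f - f₀, f₀ + t⁻¹ • k])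
    (by intro i _; fin_cases i <;> simp <;> linarith)
    (by simp [Fin.sum_univ_three]; ring) (by simp)
  have hcomb : (1 - 2 * t) • f + t • (2 • f - f₀) + t • (f₀ + t⁻¹ • k) = f + k := by
    rw [smul_add t, smul_smul, mul_inv_cancel₀ ht.ne', one_smul]
    module
  simp only [Fin.sum_univ_three, Matrix.cons_val_zero, Matrix.cons_val_one,
    Matrix.cons_val_two, Matrix.tail_cons, Matrix.head_cons, smul_eq_mul, hcomb] at hjensen
  linarith

section DownwardContinuity

variable {X : Type*} [TopologicalSpace X] {h : ℕ → X →ᵇ ℝ}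

theorem nonneg_of_antitone_of_tendsto_zero (hanti : Antitone h)
    (htend : ∀ x, Tendsto (fun n => h n x) atTop (𝓝 0)) (n : ℕ) : 0 ≤ h n :=
  fun x => Antitone.le_of_tendsto (fun _ _ hmn => hanti hmn x) (htend x) n

theorem DownwardContinuousAt.tendsto_add_smul {F : (X →ᵇ ℝ) → ℝ} {f₀ : X →ᵇ ℝ}
    (hF : DownwardContinuousAt F f₀) {c : ℝ} (hc : 0 ≤ c) (hanti : Antitone h)
    (htend : ∀ x, Tendsto (fun n => h n x) atTop (𝓝 0)) :
    Tendsto (fun n => F (f₀ + c • h n)) atTop (𝓝 (F f₀)) :=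
  hF (fun n => c • h n) (fun _ _ hmn x => mul_le_mul_of_nonneg_left (hanti hmn x) hc)
    (fun x => by simpa using (htend x).const_mul c)

theorem DownwardContinuousAt.of_convexOn {F : (X →ᵇ ℝ) → ℝ} {f₀ : X →ᵇ ℝ}
    (hf₀ : DownwardContinuousAt F f₀) (hconv : ConvexOn ℝ Set.univ F) (hmono : Monotone F)
    (f : X →ᵇ ℝ) : DownwardContinuousAt F f := by
  intro h hanti htend
  set C := F (2 • f - f₀) + F f₀ - 2 * F f
  refine tendsto_order.2 ⟨fun a ha => Eventually.of_forall fun n =>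
    ha.trans_le (hmono (le_add_of_nonneg_right
      (nonneg_of_antitone_of_tendsto_zero hanti htend n))), fun b hb => ?_⟩
  have hlin : Tendsto (fun t : ℝ => F f + t * C) (𝓝[>] 0) (𝓝 (F f)) := by
    simpa using ((tendsto_id.mul_const C).const_add (F f)).mono_left
      (nhdsWithin_le_nhds (a := (0 : ℝ)))
  obtain ⟨t, hbt, ht, ht'⟩ := ((hlin.eventually (gt_mem_nhds hb)).and
    (Ioc_mem_nhdsGT (by norm_num : (0 : ℝ) < 1 / 2))).exists
  have hupper : Tendsto (fun n => F f + t * C + t * (F (f₀ + t⁻¹ • h n) - F f₀)) atTop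
      (𝓝 (F f + t * C)) := by
    simpa using ((hf₀.tendsto_add_smul (inv_nonneg.2 ht.le) hanti htend).sub_const (F f₀)
      |>.const_mul t).const_add (F f + t * C)
  filter_upwards [hupper.eventually (gt_mem_nhds hbt)] with n hn
  exact (hconv.map_add_le_three_point f f₀ (h n) ht (by linarith)).trans_lt hn

end DownwardContinuity

theorem stmt10_general {X : Type*} [TopologicalSpace X]
    (F : (X →ᵇ ℝ) → ℝ) (hconv : ConvexOn ℝ Set.univ F) (hmono : Monotone F)
    (hpoint : ∃ f₀ : X →ᵇ ℝ, ∀ h : ℕ → X →ᵇ ℝ, Antitone h →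
      (∀ x, Tendsto (fun n => h n x) atTop (𝓝 (0 : ℝ))) →
      Tendsto (fun n => F (f₀ + h n)) atTop (𝓝 (F f₀))) :
    ∀ f : X →ᵇ ℝ, ∀ h : ℕ → X →ᵇ ℝ, Antitone h →
      (∀ x, Tendsto (fun n => h n x) atTop (𝓝 (0 : ℝ))) →
      Tendsto (fun n => F (f + h n)) atTop (𝓝 (F f)) := by
  obtain ⟨f₀, hf₀⟩ := hpoint
  exact fun f => DownwardContinuousAt.of_convexOn hf₀ hconv hmono f

/-- A convex nondecreasing `F : C_b(X) → ℝ` with `F 0 = 0` that is downward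
continuous at some point (e.g. at `0`: `h_n ↓ 0` pointwise implies `F(h_n) ↓ 0`) is downward
continuous at every `f`: for every sequence `h_n ↓ 0` pointwise, `F(f + h_n) ↓ F(f)`. -/
theorem stmt10 {X : Type*} [TopologicalSpace X] [PolishSpace X]
    (F : (X →ᵇ ℝ) → ℝ) (hconv : ConvexOn ℝ Set.univ F) (hmono : Monotone F)
    (hF0 : F 0 = 0)
    (hpoint : ∃ f₀ : X →ᵇ ℝ, ∀ h : ℕ → X →ᵇ ℝ, Antitone h →
      (∀ x, Tendsto (fun n => h n x) atTop (𝓝 (0 : ℝ))) →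
      Tendsto (fun n => F (f₀ + h n)) atTop (𝓝 (F f₀))) :
    ∀ f : X →ᵇ ℝ, ∀ h : ℕ → X →ᵇ ℝ, Antitone h →
      (∀ x, Tendsto (fun n => h n x) atTop (𝓝 (0 : ℝ))) →
      Tendsto (fun n => F (f + h n)) atTop (𝓝 (F f)) :=
  stmt10_general F hconv hmono hpoint
end

section
/- Let X be a Polish space and let Γ be a set of finite nonnegative Borel measures on X that is bounded in total mass (sup{μ(X) : μ ∈ Γ} < ∞). Then Γ is uniformly tight if and only if for every sequence h_n ∈ C_b(X) with h_n ↓ 0 pointwise on X, one has sup{∫ h_n dμ : μ ∈ Γ} → 0 as n → ∞. -/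
/-!
If `Γ` is tight, Dini's theorem makes `h_n` uniformly small on a compact set carrying all but `ε`
of every `μ ∈ Γ`, while off that set `h_n ≤ ‖h_0‖`; the mass bound controls the first part.

Conversely, let `z` be a dense sequence in a complete separable metric space. For `δ > 0` the
functions `min 1 (infDist x {z₀, …, zₙ} / δ)` decrease to `0`, so by Markov's inequality a single
finite set `F` has `μ (thickening δ F)ᶜ` uniformly small. Intersecting such thickenings over
`δ = 1/(m+1)` with errors summing to `ε` gives a totally bounded set, whose closure is the
required compact set.
-/

open MeasureTheory BoundedContinuousFunction Filter Topology Set Metric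
open scoped NNReal ENNReal

theorem MeasureTheory.integral_le_measureReal_mul_add_measureReal_compl_mul {X : Type*}
    [MeasurableSpace X] {μ : Measure X} [IsFiniteMeasure μ] {f : X → ℝ} (hf : Integrable f μ)
    {s : Set X} (hs : MeasurableSet s) {a b : ℝ} (ha : ∀ x ∈ s, f x ≤ a)
    (hb : ∀ x ∈ sᶜ, f x ≤ b) :
    ∫ x, f x ∂μ ≤ μ.real s * a + μ.real sᶜ * b := by
  rw [← integral_add_compl hs hf]
  gcongr
  · simpa using setIntegral_mono_on hf.integrableOn integrableOn_const hs ha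
  · simpa using setIntegral_mono_on hf.integrableOn integrableOn_const hs.compl hb

theorem eventually_forall_integral_le_of_tight {X : Type*} [TopologicalSpace X] [T2Space X]
    [MeasurableSpace X] [OpensMeasurableSpace X] {Γ : Set (FiniteMeasure X)} {C : ℝ≥0}
    (hC : ∀ μ ∈ Γ, μ.mass ≤ C)
    (hΓ : ∀ ε : ℝ, 0 < ε → ∃ L : Set X, IsCompact L ∧
      ∀ μ ∈ Γ, (μ : Measure X) Lᶜ ≤ ENNReal.ofReal ε)
    {h : ℕ → X →ᵇ ℝ} (h_anti : Antitone h) (h_lim : ∀ x, Tendsto (h · x) atTop (𝓝 0))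
    {ε : ℝ} (hε : 0 < ε) :
    ∀ᶠ n in atTop, ∀ μ ∈ Γ, ∫ x, h n x ∂(μ : Measure X) ≤ ε := by
  set M := ‖h 0‖
  have half : ∀ a : ℝ, 0 ≤ a → a * (ε / (2 * (a + 1))) ≤ ε / 2 := fun a ha => by
    rw [mul_div_assoc', div_le_div_iff₀ (by positivity) two_pos]
    nlinarith
  obtain ⟨L, hL, hLc⟩ := hΓ (ε / (2 * (M + 1))) (by positivity)
  have h_unif : TendstoUniformlyOn (fun n x => h n x) 0 atTop L :=
    Antitone.tendstoUniformlyOn_of_forall_tendsto hL (fun n => (h n).continuous.continuousOn)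
      (fun x _ _ _ hmn => h_anti hmn x) continuousOn_const (fun x _ => h_lim x)
  filter_upwards [Metric.tendstoUniformlyOn_iff.1 h_unif (ε / (2 * (C + 1))) (by positivity)]
    with n hn μ hμ
  have hL_le : ∀ x ∈ L, h n x ≤ ε / (2 * (C + 1)) := fun x hx =>
    (le_abs_self _).trans (by simpa [Real.dist_eq] using (hn x hx).le)
  have hLc_le : ∀ x ∈ Lᶜ, h n x ≤ M := fun x _ =>
    (h_anti n.zero_le x).trans ((le_abs_self _).trans ((h 0).norm_coe_le_norm x))
  have hμL : (μ : Measure X).real L ≤ C :=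
    NNReal.coe_le_coe.2 ((μ.apply_le_mass L).trans (hC μ hμ))
  have hμLc : (μ : Measure X).real Lᶜ ≤ ε / (2 * (M + 1)) :=
    ENNReal.toReal_le_of_le_ofReal (by positivity) (hLc μ hμ)
  calc ∫ x, h n x ∂(μ : Measure X)
      ≤ (μ : Measure X).real L * (ε / (2 * (C + 1))) + (μ : Measure X).real Lᶜ * M :=
        integral_le_measureReal_mul_add_measureReal_compl_mul ((h n).integrable _)
          hL.measurableSet hL_le hLc_le
    _ ≤ C * (ε / (2 * (C + 1))) + ε / (2 * (M + 1)) * M := by gcongr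
    _ ≤ ε := by linarith [half C C.2, half M (norm_nonneg _)]

section InfDistCutoff

variable {X : Type*} [PseudoMetricSpace X]

noncomputable def infDistCutoff (s : Set X) {δ : ℝ} (hδ : 0 < δ) : X →ᵇ ℝ :=
  .ofNormedAddCommGroup (fun x => min 1 (infDist x s / δ))
    (continuous_const.min ((continuous_infDist_pt s).div_const δ)) 1 fun x => by
      rw [Real.norm_eq_abs, abs_of_nonneg (le_min zero_le_one (div_nonneg infDist_nonneg hδ.le))]
      exact min_le_left _ _

variable {s t : Set X} {δ : ℝ} (hδ : 0 < δ)

theorem infDistCutoff_apply (x : X) : infDistCutoff s hδ x = min 1 (infDist x s / δ) := rfl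

theorem infDistCutoff_nonneg (x : X) : 0 ≤ infDistCutoff s hδ x :=
  le_min zero_le_one (div_nonneg infDist_nonneg hδ.le)

theorem infDistCutoff_le_of_subset (hst : s ⊆ t) (hs : s.Nonempty) (x : X) :
    infDistCutoff t hδ x ≤ infDistCutoff s hδ x :=
  min_le_min_left _ (div_le_div_of_nonneg_right (infDist_le_infDist_of_subset hst hs) hδ.le)

theorem one_le_infDistCutoff (hs : s.Nonempty) {x : X} (hx : x ∉ thickening δ s) :
    1 ≤ infDistCutoff s hδ x :=
  le_min le_rfl ((one_le_div hδ).2 (not_lt.1 ((mem_thickening_iff_infDist_lt hs).not.1 hx)))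

theorem tendsto_infDistCutoff {ι : Type*} {l : Filter ι} {s : ι → Set X} {x : X}
    (h : Tendsto (fun i => infDist x (s i)) l (𝓝 0)) :
    Tendsto (fun i => infDistCutoff (s i) hδ x) l (𝓝 0) := by
  simpa [infDistCutoff_apply] using (tendsto_const_nhds (x := (1 : ℝ))).min (h.div_const δ)

end InfDistCutoff

theorem DenseRange.tendsto_infDist_image_Iic {X : Type*} [PseudoMetricSpace X] {z : ℕ → X}
    (hz : DenseRange z) (x : X) : Tendsto (fun n => infDist x (z '' Iic n)) atTop (𝓝 0) := by
  refine Metric.tendsto_atTop.2 fun ε hε => ?_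
  obtain ⟨k, hk⟩ := hz.exists_dist_lt x hε
  refine ⟨k, fun n hn => ?_⟩
  rw [Real.dist_0_eq_abs, abs_of_nonneg infDist_nonneg]
  exact (infDist_le_dist_of_mem (mem_image_of_mem z (mem_Iic.2 hn))).trans_lt hk

theorem exists_finite_measure_compl_thickening_le {X : Type*} [PseudoMetricSpace X]
    [TopologicalSpace.SeparableSpace X] [Nonempty X] [MeasurableSpace X]
    [OpensMeasurableSpace X] {Γ : Set (FiniteMeasure X)}
    (hΓ : ∀ h : ℕ → X →ᵇ ℝ, Antitone h → (∀ x, Tendsto (h · x) atTop (𝓝 0)) →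
      ∀ ε : ℝ, 0 < ε → ∃ N : ℕ, ∀ n ≥ N, ∀ μ ∈ Γ, ∫ x, h n x ∂(μ : Measure X) ≤ ε)
    {δ : ℝ} (hδ : 0 < δ) {η : ℝ} (hη : 0 < η) :
    ∃ F : Set X, F.Finite ∧ ∀ μ ∈ Γ, (μ : Measure X) (thickening δ F)ᶜ ≤ ENNReal.ofReal η := by
  set z := TopologicalSpace.denseSeq X
  have hF_ne : ∀ n, (z '' Iic n).Nonempty := fun n => ⟨z 0, mem_image_of_mem z n.zero_le⟩
  set h : ℕ → X →ᵇ ℝ := fun n => infDistCutoff (z '' Iic n) hδ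
  have h_anti : Antitone h := fun m n hmn x =>
    infDistCutoff_le_of_subset hδ (image_mono (Iic_subset_Iic.2 hmn)) (hF_ne m) x
  have h_lim : ∀ x, Tendsto (h · x) atTop (𝓝 0) := fun x =>
    tendsto_infDistCutoff hδ ((TopologicalSpace.denseRange_denseSeq X).tendsto_infDist_image_Iic x)
  obtain ⟨N, hN⟩ := hΓ h h_anti h_lim η hη
  refine ⟨z '' Iic N, (finite_Iic N).image z, fun μ hμ => ?_⟩
  have markov := mul_meas_ge_le_integral_of_nonneg (μ := (μ : Measure X))
    (ae_of_all _ (infDistCutoff_nonneg hδ)) ((h N).integrable _) 1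
  calc (μ : Measure X) (thickening δ (z '' Iic N))ᶜ ≤ (μ : Measure X) {x | 1 ≤ h N x} :=
        measure_mono fun x hx => one_le_infDistCutoff hδ (hF_ne N) hx
    _ ≤ ENNReal.ofReal η := by
        rw [ENNReal.le_ofReal_iff_toReal_le (measure_ne_top _ _) hη.le, ← measureReal_def]
        simpa only [one_mul] using markov.trans (hN N le_rfl μ hμ)

theorem exists_isCompact_measure_compl_le_of_thickening {X : Type*} [PseudoMetricSpace X]
    [CompleteSpace X] [MeasurableSpace X] {Γ : Set (Measure X)}
    (hΓ : ∀ δ : ℝ, 0 < δ → ∀ η : ℝ, 0 < η →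
      ∃ F : Set X, F.Finite ∧ ∀ μ ∈ Γ, μ (thickening δ F)ᶜ ≤ ENNReal.ofReal η)
    {ε : ℝ} (hε : 0 < ε) : ∃ L : Set X, IsCompact L ∧ ∀ μ ∈ Γ, μ Lᶜ ≤ ENNReal.ofReal ε := by
  obtain ⟨η, hη_pos, hη_sum⟩ :=
    ENNReal.exists_pos_sum_of_countable (ENNReal.ofReal_pos.2 hε).ne' ℕ
  choose F hF_fin hF using fun m : ℕ =>
    hΓ (1 / (m + 1)) Nat.one_div_pos_of_nat (η m) (NNReal.coe_pos.2 (hη_pos m))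
  set K := ⋂ m : ℕ, thickening (1 / (m + 1)) (F m)
  have hK : TotallyBounded K := by
    refine Metric.totallyBounded_iff.2 fun r hr => ?_
    obtain ⟨m, hm⟩ := exists_nat_one_div_lt hr
    refine ⟨F m, hF_fin m, (iInter_subset _ m).trans ?_⟩
    rw [thickening_eq_biUnion_ball]
    exact iUnion₂_mono fun y _ => ball_subset_ball hm.le
  refine ⟨closure K, hK.closure.isCompact_of_isClosed isClosed_closure, fun μ hμ => ?_⟩
  calc μ (closure K)ᶜ ≤ μ (⋃ m : ℕ, (thickening (1 / (m + 1)) (F m))ᶜ) := by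
        rw [← compl_iInter]
        exact measure_mono (compl_subset_compl.2 subset_closure)
    _ ≤ ∑' m : ℕ, μ (thickening (1 / (m + 1)) (F m))ᶜ := measure_iUnion_le _
    _ ≤ ∑' m, (η m : ℝ≥0∞) :=
        ENNReal.tsum_le_tsum fun m => (hF m μ hμ).trans_eq ENNReal.ofReal_coe_nnreal
    _ ≤ ENNReal.ofReal ε := hη_sum.le

/-- A set `Γ` of finite nonnegative Borel measures on a Polish space `X` that is
bounded in total mass is uniformly tight if and only if for every sequence `h_n ↓ 0` in
`C_b(X)` one has `sup {∫ h_n dμ : μ ∈ Γ} → 0`. -/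
theorem stmt11 {X : Type*} [TopologicalSpace X] [PolishSpace X]
    [MeasurableSpace X] [BorelSpace X]
    (Γ : Set (FiniteMeasure X)) (C : ℝ≥0) (hbdd : ∀ μ ∈ Γ, μ.mass ≤ C) :
    (∀ ε : ℝ, 0 < ε → ∃ L : Set X, IsCompact L ∧
        ∀ μ ∈ Γ, (μ : Measure X) Lᶜ ≤ ENNReal.ofReal ε) ↔
    (∀ h : ℕ → X →ᵇ ℝ, Antitone h →
      (∀ x, Tendsto (fun n => h n x) atTop (𝓝 (0 : ℝ))) →
      ∀ ε : ℝ, 0 < ε → ∃ N : ℕ, ∀ n ≥ N, ∀ μ ∈ Γ, ∫ x, h n x ∂(μ : Measure X) ≤ ε) := by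
  refine ⟨fun htight h h_anti h_lim ε hε => eventually_atTop.1
    (eventually_forall_integral_le_of_tight hbdd htight h_anti h_lim hε), fun hΓ ε hε => ?_⟩
  cases isEmpty_or_nonempty X
  · exact ⟨univ, isCompact_univ, fun μ _ => by simp⟩
  let := TopologicalSpace.upgradeIsCompletelyMetrizable X
  obtain ⟨L, hL, hLc⟩ := exists_isCompact_measure_compl_le_of_thickening (Γ := (↑) '' Γ)
    (fun δ hδ η hη => (exists_finite_measure_compl_thickening_le hΓ hδ hη).imp
      fun _ ⟨hF, hFμ⟩ => ⟨hF, forall_mem_image.2 hFμ⟩) hε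
  exact ⟨L, hL, fun μ hμ => hLc μ (mem_image_of_mem _ hμ)⟩
end

section
/- Let X be a Polish space and let F : C_b(X) → ℝ be a convex nondecreasing downward continuous function with F(0) = 0. Then for every f ∈ C_b(X) there exists a finite nonnegative Borel measure μ on X such that ∫ f dμ = F(f) + F*(μ), where F*(μ) = sup{∫ h dμ − F(h) : h ∈ C_b(X)}; equivalently, F(f + g) ≥ F(f) + ∫ g dμ for all g ∈ C_b(X), so the epigraph of F has a supporting functional at every point (f, F(f)). -/
/-!
The one-sided directional derivative `g ↦ F'(f; g) = inf_{t > 0} (F (f + t g) - F f) / t` of the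
convex function `F` is sublinear and bounded by `F (f + g) - F f`, so by Hahn–Banach some linear
`L` lies below it. Monotonicity of `F` makes `L` positive, and downward continuity of `F` at `f`
makes `L` Daniell continuous: `L u_n → 0` whenever `u_n ↓ 0` pointwise.

Such a functional is integration against a finite measure. The content
`λ K = inf {L g : g ≥ 0, g ≥ 1 on K}` yields a measure `μ` with `μ U ≤ L g` whenever `g ≥ 1` on the
open set `U`; slicing `g ≥ 0` into thin horizontal layers then gives `∫ g dμ ≤ L g`. On a Polish
space, Daniell continuity applied to cutoffs around finite pieces of a dense sequence produces
compact sets `K` with `λ K ≥ L 1 - ε`, hence `μ X = L 1`, and shifting by constants turns the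
inequality into `∫ g dμ = L g`. A measure below `g ↦ F (f + g) - F f` is exactly one for which
the Fenchel equality `∫ f dμ = F f + F* μ` holds.
-/

open MeasureTheory BoundedContinuousFunction Filter Topology

/-- The conjugate function `F*(μ) = sup {∫ h dμ - F(h) : h ∈ C_b(X)} ∈ ℝ ∪ {+∞}`. -/
noncomputable def conjugate13 {X : Type*} [TopologicalSpace X] [MeasurableSpace X]
    (F : (X →ᵇ ℝ) → ℝ) (μ : FiniteMeasure X) : EReal :=
  ⨆ h : X →ᵇ ℝ, ((∫ x, h x ∂(μ : Measure X) - F h : ℝ) : EReal)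

open Metric Set

section DirectionalDerivative

variable {E : Type*} [AddCommGroup E] [Module ℝ E] {F : E → ℝ}

noncomputable def dirDeriv (F : E → ℝ) (f g : E) : ℝ :=
  sInf ((fun t => (F (f + t • g) - F f) / t) '' Ioi 0)

lemma ConvexOn.comp_line (hF : ConvexOn ℝ univ F) (f g : E) :
    ConvexOn ℝ univ (fun t : ℝ => F (f + t • g)) := by
  simpa [Function.comp_def, AffineMap.lineMap_apply, add_comm f]
    using hF.comp_affineMap (AffineMap.lineMap f (f + g))

lemma ConvexOn.slope_line_mono (hF : ConvexOn ℝ univ F) (f g : E) {s t : ℝ} (hs : s ≠ 0)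
    (ht : t ≠ 0) (hst : s ≤ t) :
    (F (f + s • g) - F f) / s ≤ (F (f + t • g) - F f) / t := by
  simpa using (hF.comp_line f g).secant_mono (mem_univ 0) (mem_univ s) (mem_univ t) hs ht hst

lemma ConvexOn.bddBelow_slope_line (hF : ConvexOn ℝ univ F) (f g : E) :
    BddBelow ((fun t => (F (f + t • g) - F f) / t) '' Ioi 0) := by
  refine ⟨(F (f + (-1 : ℝ) • g) - F f) / (-1), ?_⟩
  rintro _ ⟨t, ht, rfl⟩
  exact hF.slope_line_mono f g (by norm_num) (ne_of_gt ht) (by linarith [mem_Ioi.1 ht])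

lemma ConvexOn.dirDeriv_le (hF : ConvexOn ℝ univ F) (f g : E) {t : ℝ} (ht : 0 < t) :
    dirDeriv F f g ≤ (F (f + t • g) - F f) / t :=
  csInf_le (hF.bddBelow_slope_line f g) ⟨t, ht, rfl⟩

lemma ConvexOn.dirDeriv_le_sub (hF : ConvexOn ℝ univ F) (f g : E) :
    dirDeriv F f g ≤ F (f + g) - F f := by
  simpa using hF.dirDeriv_le f g one_pos

lemma le_dirDeriv {f g : E} {a : ℝ} (h : ∀ t > 0, a ≤ (F (f + t • g) - F f) / t) :
    a ≤ dirDeriv F f g :=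
  le_csInf (nonempty_Ioi.image _) (forall_mem_image.2 h)

lemma ConvexOn.map_add_smul_half_le (hF : ConvexOn ℝ univ F) (f g h : E) (t : ℝ) :
    F (f + (t / 2) • (g + h)) ≤ (F (f + t • g) + F (f + t • h)) / 2 := by
  have := hF.2 (mem_univ (f + t • g)) (mem_univ (f + t • h)) (by norm_num : (0:ℝ) ≤ 1 / 2)
    (by norm_num : (0:ℝ) ≤ 1 / 2) (by norm_num)
  have hmid : (1 / 2 : ℝ) • (f + t • g) + (1 / 2 : ℝ) • (f + t • h) = f + (t / 2) • (g + h) := by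
    module
  rw [hmid, smul_eq_mul, smul_eq_mul] at this
  linarith

lemma ConvexOn.dirDeriv_add_le (hF : ConvexOn ℝ univ F) (f g h : E) :
    dirDeriv F f (g + h) ≤ dirDeriv F f g + dirDeriv F f h := by
  have key : ∀ t₁ > 0, ∀ t₂ > 0, dirDeriv F f (g + h) ≤
      (F (f + t₁ • g) - F f) / t₁ + (F (f + t₂ • h) - F f) / t₂ := by
    intro t₁ ht₁ t₂ ht₂
    set t := min t₁ t₂
    have ht : 0 < t := lt_min ht₁ ht₂
    calc dirDeriv F f (g + h) ≤ (F (f + (t / 2) • (g + h)) - F f) / (t / 2) :=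
          hF.dirDeriv_le f _ (half_pos ht)
      _ ≤ (F (f + t • g) - F f) / t + (F (f + t • h) - F f) / t := by
          rw [← add_div, div_le_div_iff₀ (half_pos ht) ht]
          nlinarith [hF.map_add_smul_half_le f g h t]
      _ ≤ _ := add_le_add (hF.slope_line_mono f g ht.ne' ht₁.ne' (min_le_left _ _))
          (hF.slope_line_mono f h ht.ne' ht₂.ne' (min_le_right _ _))
  rw [← sub_le_iff_le_add]
  refine le_dirDeriv fun t₁ ht₁ => ?_
  rw [sub_le_comm]
  exact le_dirDeriv fun t₂ ht₂ => sub_le_comm.1 (sub_le_iff_le_add.2 (key t₁ ht₁ t₂ ht₂))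

lemma dirDeriv_smul (f g : E) {c : ℝ} (hc : 0 < c) :
    dirDeriv F f (c • g) = c * dirDeriv F f g := by
  have hslope : (fun t => (F (f + t • c • g) - F f) / t) =
      (c • ·) ∘ (fun t => (F (f + t • g) - F f) / t) ∘ (c * ·) := by
    ext t
    simp only [Function.comp_apply, smul_smul, smul_eq_mul]
    rw [mul_comm t c, ← mul_div_assoc, mul_div_mul_left _ _ hc.ne']
  rw [dirDeriv, dirDeriv, hslope, image_comp, image_comp, image_mul_left_Ioi hc, mul_zero,
    image_smul, Real.sInf_smul_of_nonneg hc.le, smul_eq_mul]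

lemma dirDeriv_zero_right (f : E) : dirDeriv F f 0 = 0 := by
  simp [dirDeriv, (nonempty_Ioi (a := (0:ℝ))).image_const]

lemma ConvexOn.exists_linearMap_le_sub (hF : ConvexOn ℝ univ F) (f : E) :
    ∃ ℓ : E →ₗ[ℝ] ℝ, ∀ g, ℓ g ≤ F (f + g) - F f := by
  obtain ⟨ℓ, -, hℓ⟩ := exists_extension_of_le_sublinear ⟨⊥, 0⟩ (dirDeriv F f)
    (fun _ hc g => dirDeriv_smul f g hc) (hF.dirDeriv_add_le f)
    (fun g => by simp [(Submodule.mem_bot ℝ).1 g.2, dirDeriv_zero_right])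
  exact ⟨ℓ, fun g => (hℓ g).trans (hF.dirDeriv_le_sub f g)⟩

end DirectionalDerivative

lemma isCompact_iInter_infDist_le {X : Type*} [PseudoMetricSpace X] [CompleteSpace X]
    {T : ℕ → Set X} (hT : ∀ m, (T m).Finite) (hT' : ∀ m, (T m).Nonempty) {r : ℕ → ℝ}
    (hr : ∀ δ > 0, ∃ m, r m < δ) : IsCompact (⋂ m, {x | infDist x (T m) ≤ r m}) := by
  refine (totallyBounded_iff.2 fun δ hδ => ?_).isCompact_of_isClosed
    (isClosed_iInter fun m => isClosed_le (continuous_infDist_pt _) continuous_const)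
  obtain ⟨m, hm⟩ := hr δ hδ
  refine ⟨T m, hT m, fun x hx => ?_⟩
  obtain ⟨y, hy, hxy⟩ := (infDist_lt_iff (hT' m)).1 ((mem_iInter.1 hx m).trans_lt hm)
  exact mem_biUnion hy (mem_ball.2 hxy)

def DaniellContinuous {X : Type*} [TopologicalSpace X] (L : (X →ᵇ ℝ) →ₚ[ℝ] ℝ) : Prop :=
  ∀ u : ℕ → X →ᵇ ℝ, Antitone u → (∀ x, Tendsto (fun n => u n x) atTop (𝓝 0)) →
    Tendsto (fun n => L (u n)) atTop (𝓝 0)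

section Layers

variable {X : Type*} [TopologicalSpace X]

noncomputable def layer (g : X →ᵇ ℝ) (δ : ℝ) (i : ℕ) : X →ᵇ ℝ :=
  g ⊓ const X (((i + 1 : ℕ) : ℝ) * δ) - g ⊓ const X (i * δ)

variable (g : X →ᵇ ℝ) {δ : ℝ}

lemma layer_apply (i : ℕ) (x : X) :
    layer g δ i x = min (g x) ((i + 1) * δ) - min (g x) (i * δ) := by
  simp [layer]

lemma layer_nonneg (hδ : 0 ≤ δ) (i : ℕ) : 0 ≤ layer g δ i := fun x => by
  show 0 ≤ layer g δ i x
  rw [layer_apply, sub_nonneg]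
  gcongr
  linarith

lemma layer_le_indicator (hδ : 0 ≤ δ) (i : ℕ) (x : X) :
    layer g δ i x ≤ {x | i * δ < g x}.indicator (fun _ => δ) x := by
  rw [layer_apply]
  by_cases hx : i * δ < g x
  · rw [indicator_of_mem (show x ∈ {x | i * δ < g x} from hx), min_eq_right hx.le]
    linarith [min_le_right (g x) ((i + 1) * δ)]
  · rw [indicator_of_notMem (show x ∉ {x | i * δ < g x} from hx), min_eq_left (not_lt.1 hx),
      min_eq_left (by linarith [not_lt.1 hx]), sub_self]

variable {g} in
lemma layer_eq_of_lt (hδ : 0 ≤ δ) {i : ℕ} {x : X} (hx : (i + 1) * δ < g x) :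
    layer g δ i x = δ := by
  rw [layer_apply, min_eq_right hx.le, min_eq_right (by linarith)]
  ring

variable {g} in
lemma sum_layer (hg : 0 ≤ g) {M : ℕ} (hM : ∀ x, g x ≤ M * δ) :
    ∑ i ∈ Finset.range M, layer g δ i = g := by
  unfold layer
  rw [Finset.sum_range_sub (fun i => g ⊓ const X (i * δ))]
  ext x
  have hgx : 0 ≤ g x := hg x
  simp [hM x, hgx]

lemma integral_layer_le_mul_measureReal [MeasurableSpace X] [OpensMeasurableSpace X]
    {μ : Measure X} [IsFiniteMeasure μ] (hδ : 0 ≤ δ) (i : ℕ) :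
    ∫ x, layer g δ i x ∂μ ≤ δ * μ.real {x | i * δ < g x} := by
  have hU : MeasurableSet {x | i * δ < g x} :=
    (isOpen_lt continuous_const g.continuous).measurableSet
  calc ∫ x, layer g δ i x ∂μ ≤ ∫ x, {x | i * δ < g x}.indicator (fun _ => δ) x ∂μ :=
        integral_mono ((layer g δ i).integrable _) ((integrable_const δ).indicator hU)
          (layer_le_indicator g hδ i)
    _ = δ * μ.real {x | i * δ < g x} := by
        rw [integral_indicator_const _ hU, smul_eq_mul, mul_comm]

end Layers

section DaniellMeasure

variable {X : Type*} [TopologicalSpace X] (L : (X →ᵇ ℝ) →ₚ[ℝ] ℝ)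

noncomputable def daniellContentAux (K : Set X) : ℝ :=
  sInf (L '' {g | 0 ≤ g ∧ ∀ x ∈ K, 1 ≤ g x})

variable {L}

lemma daniellContentAux_le {K : Set X} {g : X →ᵇ ℝ} (hg : 0 ≤ g) (hgK : ∀ x ∈ K, 1 ≤ g x) :
    daniellContentAux L K ≤ L g :=
  csInf_le ⟨0, forall_mem_image.2 fun _ hg => L.map_nonneg hg.1⟩ ⟨g, ⟨hg, hgK⟩, rfl⟩

lemma le_daniellContentAux {K : Set X} {r : ℝ}
    (h : ∀ g : X →ᵇ ℝ, 0 ≤ g → (∀ x ∈ K, 1 ≤ g x) → r ≤ L g) : r ≤ daniellContentAux L K :=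
  le_csInf ⟨L 1, 1, ⟨fun _ => zero_le_one, fun _ _ => le_rfl⟩, rfl⟩
    (forall_mem_image.2 fun g hg => h g hg.1 hg.2)

variable (L)

lemma daniellContentAux_nonneg (K : Set X) : 0 ≤ daniellContentAux L K :=
  le_daniellContentAux fun _ hg _ => L.map_nonneg hg

lemma daniellContentAux_mono {K₁ K₂ : Set X} (h : K₁ ⊆ K₂) :
    daniellContentAux L K₁ ≤ daniellContentAux L K₂ :=
  le_daniellContentAux fun _ hg hgK => daniellContentAux_le hg fun x hx => hgK x (h hx)

lemma daniellContentAux_union_le (K₁ K₂ : Set X) :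
    daniellContentAux L (K₁ ∪ K₂) ≤ daniellContentAux L K₁ + daniellContentAux L K₂ := by
  rw [← sub_le_iff_le_add]
  refine le_daniellContentAux fun g₁ hg₁ hK₁ => ?_
  rw [sub_le_comm]
  refine le_daniellContentAux fun g₂ hg₂ hK₂ => ?_
  rw [sub_le_iff_le_add, add_comm, ← map_add]
  refine daniellContentAux_le (add_nonneg hg₁ hg₂) fun x hx => ?_
  rcases hx with hx | hx
  · exact le_add_of_le_of_nonneg (hK₁ x hx) (hg₂ x)
  · exact le_add_of_nonneg_of_le (hg₁ x) (hK₂ x hx)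

lemma daniellContentAux_union_of_disjoint [NormalSpace X] {K₁ K₂ : Set X}
    (hK₁ : IsClosed K₁) (hK₂ : IsClosed K₂) (hd : Disjoint K₁ K₂) :
    daniellContentAux L (K₁ ∪ K₂) = daniellContentAux L K₁ + daniellContentAux L K₂ := by
  refine (daniellContentAux_union_le L K₁ K₂).antisymm (le_daniellContentAux fun g hg hgK => ?_)
  obtain ⟨φ, hφ₂, hφ₁, hφ⟩ := exists_bounded_zero_one_of_closed hK₂ hK₁ hd.symm
  have hsplit : g * φ + g * (1 - φ) = g := by ring
  rw [← hsplit, map_add]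
  refine add_le_add (daniellContentAux_le (fun x => ?_) fun x hx => ?_)
    (daniellContentAux_le (fun x => ?_) fun x hx => ?_)
  · simpa using mul_nonneg (hg x) (hφ x).1
  · simpa [hφ₁ hx] using hgK x (Or.inl hx)
  · simpa using mul_nonneg (hg x) (sub_nonneg.2 (hφ x).2)
  · simpa [hφ₂ hx] using hgK x (Or.inr hx)

noncomputable def daniellContent [NormalSpace X] : Content X where
  toFun K := (daniellContentAux L K).toNNReal
  mono' _ _ h := Real.toNNReal_le_toNNReal (daniellContentAux_mono L h)
  sup_disjoint' K₁ K₂ hd h₁ h₂ := by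
    rw [TopologicalSpace.Compacts.coe_sup, daniellContentAux_union_of_disjoint L h₁ h₂ hd,
      Real.toNNReal_add (daniellContentAux_nonneg L _) (daniellContentAux_nonneg L _)]
  sup_le' K₁ K₂ :=
    (Real.toNNReal_le_toNNReal (daniellContentAux_union_le L K₁ K₂)).trans Real.toNNReal_add_le

variable [NormalSpace X] [R1Space X] [MeasurableSpace X] [BorelSpace X]

noncomputable def daniellMeasure : Measure X := (daniellContent L).measure

variable {L}

lemma daniellMeasure_le_of_isOpen {U : Set X} (hU : IsOpen U) {g : X →ᵇ ℝ} (hg : 0 ≤ g)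
    (hgU : ∀ x ∈ U, 1 ≤ g x) : daniellMeasure L U ≤ ENNReal.ofReal (L g) := by
  rw [daniellMeasure, Content.measure_apply _ hU.measurableSet,
    Content.outerMeasure_of_isOpen _ _ hU]
  refine iSup₂_le fun K hK => ENNReal.coe_le_coe.2 (Real.toNNReal_le_toNNReal ?_)
  exact daniellContentAux_le hg fun x hx => hgU x (hK hx)

instance : IsFiniteMeasure (daniellMeasure L) :=
  ⟨(daniellMeasure_le_of_isOpen (g := 1) isOpen_univ (fun _ => zero_le_one) fun _ _ => le_rfl
    ).trans_lt ENNReal.ofReal_lt_top⟩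

lemma daniellMeasure_real_le_of_isOpen {U : Set X} (hU : IsOpen U) {g : X →ᵇ ℝ} (hg : 0 ≤ g)
    (hgU : ∀ x ∈ U, 1 ≤ g x) : (daniellMeasure L).real U ≤ L g :=
  ENNReal.toReal_le_of_le_ofReal (L.map_nonneg hg) (daniellMeasure_le_of_isOpen hU hg hgU)

lemma daniellContentAux_le_measureReal_univ {K : Set X} (hK : IsCompact K) :
    daniellContentAux L K ≤ (daniellMeasure L).real univ := by
  have hle : daniellContent L ⟨K, hK⟩ ≤ daniellMeasure L univ := by
    rw [daniellMeasure, Content.measure_apply _ MeasurableSet.univ,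
      Content.outerMeasure_of_isOpen _ _ isOpen_univ]
    exact Content.le_innerContent _ _ ⊤ (subset_univ K)
  calc daniellContentAux L K = (ENNReal.ofReal (daniellContentAux L K)).toReal :=
        (ENNReal.toReal_ofReal (daniellContentAux_nonneg L K)).symm
    _ ≤ (daniellMeasure L).real univ := ENNReal.toReal_mono (measure_ne_top _ _) hle

lemma mul_measureReal_le_layer {g : X →ᵇ ℝ} {δ : ℝ} (hδ : 0 < δ) (i : ℕ) :
    δ * (daniellMeasure L).real {x | (i + 1) * δ < g x} ≤ L (layer g δ i) := by
  have h1 : ∀ x ∈ {x | (i + 1) * δ < g x}, 1 ≤ (δ⁻¹ • layer g δ i) x := fun x hx => by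
    simp [layer_eq_of_lt hδ.le hx, hδ.ne']
  have h0 : 0 ≤ δ⁻¹ • layer g δ i := fun x =>
    mul_nonneg (inv_nonneg.2 hδ.le) (layer_nonneg g hδ.le i x)
  calc δ * (daniellMeasure L).real _ ≤ δ * L (δ⁻¹ • layer g δ i) :=
        mul_le_mul_of_nonneg_left (daniellMeasure_real_le_of_isOpen
          (isOpen_lt continuous_const g.continuous) h0 h1) hδ.le
    _ = L (layer g δ i) := by rw [map_smul, smul_eq_mul, mul_inv_cancel_left₀ hδ.ne']

lemma integral_daniellMeasure_le_add {g : X →ᵇ ℝ} (hg : 0 ≤ g) {δ : ℝ} (hδ : 0 < δ) :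
    ∫ x, g x ∂daniellMeasure L ≤ L g + δ * (daniellMeasure L).real univ := by
  obtain ⟨M, hM⟩ := exists_nat_ge (‖g‖ / δ)
  have hsum : ∑ i ∈ Finset.range (M + 1), layer g δ i = g := sum_layer hg fun x => by
    push_cast
    linarith [(div_le_iff₀ hδ).1 hM, (le_abs_self (g x)).trans (g.norm_coe_le_norm x)]
  -- `∫ layer (i + 1) ≤ δ μ {g > (i + 1) δ} ≤ L (layer i)`, and `∫ layer 0 ≤ δ μ univ`
  calc ∫ x, g x ∂daniellMeasure L
      = ∑ i ∈ Finset.range (M + 1), ∫ x, layer g δ i x ∂daniellMeasure L := by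
        conv_lhs => rw [← hsum]
        simp only [coe_sum, Finset.sum_apply]
        exact integral_finsetSum _ fun i _ => (layer g δ i).integrable _
    _ = ∑ i ∈ Finset.range M, ∫ x, layer g δ (i + 1) x ∂daniellMeasure L
          + ∫ x, layer g δ 0 x ∂daniellMeasure L := Finset.sum_range_succ' _ _
    _ ≤ ∑ i ∈ Finset.range M, L (layer g δ i) + δ * (daniellMeasure L).real univ := by
        gcongr with i
        · refine (integral_layer_le_mul_measureReal g hδ.le (i + 1)).trans ?_
          simpa using mul_measureReal_le_layer hδ i
        · exact (integral_layer_le_mul_measureReal g hδ.le 0).trans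
            (mul_le_mul_of_nonneg_left (measureReal_mono (subset_univ _)) hδ.le)
    _ ≤ ∑ i ∈ Finset.range (M + 1), L (layer g δ i) + δ * (daniellMeasure L).real univ := by
        rw [Finset.sum_range_succ]
        linarith [L.map_nonneg (layer_nonneg g hδ.le M)]
    _ = L g + δ * (daniellMeasure L).real univ := by rw [← map_sum, hsum]

lemma integral_daniellMeasure_le_of_nonneg {g : X →ᵇ ℝ} (hg : 0 ≤ g) :
    ∫ x, g x ∂daniellMeasure L ≤ L g := by
  refine le_of_forall_pos_le_add fun ε hε => ?_
  set m := (daniellMeasure L).real univ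
  have hm : 0 ≤ m := measureReal_nonneg
  calc ∫ x, g x ∂daniellMeasure L ≤ L g + ε / (m + 1) * m :=
        integral_daniellMeasure_le_add hg (by positivity)
    _ ≤ L g + ε := by
        gcongr
        rw [div_mul_eq_mul_div, div_le_iff₀ (by positivity)]
        nlinarith

end DaniellMeasure
namespace DaniellContinuous

section Topological

variable {X : Type*} [TopologicalSpace X] {L : (X →ᵇ ℝ) →ₚ[ℝ] ℝ}

lemma map_one_le_add_of_cover (hL : DaniellContinuous L) {φ : ℕ → X →ᵇ ℝ} (hφ : ∀ m, 0 ≤ φ m)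
    {ε : ℝ} (hsum : ∀ M, ∑ m ∈ Finset.range M, L (φ m) ≤ ε) {g : X →ᵇ ℝ} (hg : 0 ≤ g)
    (hcover : ∀ x, g x < 1 → ∃ m, 1 ≤ φ m x) : L 1 ≤ L g + ε := by
  let v : ℕ → X →ᵇ ℝ := fun M => g + ∑ m ∈ Finset.range M, φ m
  have hv : Monotone v := fun M N hMN => add_le_add le_rfl
    (Finset.sum_le_sum_of_subset_of_nonneg (Finset.range_subset_range.2 hMN) fun m _ _ => hφ m)
  have hw : Antitone fun M => (1 - v M)⁺ := fun M N hMN =>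
    posPart_mono (sub_le_sub_left (hv hMN) 1)
  have hw0 : ∀ x, Tendsto (fun M => (1 - v M)⁺ x) atTop (𝓝 0) := by
    intro x
    obtain ⟨M, hM⟩ : ∃ M, 1 ≤ v M x := by
      by_cases hx : g x < 1
      · obtain ⟨m, hm⟩ := hcover x hx
        refine ⟨m + 1, hm.trans ?_⟩
        have := add_le_add (hg x)
          (Finset.single_le_sum (fun i _ => hφ i) (Finset.self_mem_range_succ m) x)
        simpa [v] using this
      · exact ⟨0, by simpa [v] using not_lt.1 hx⟩
    refine tendsto_atTop_of_eventually_const (i₀ := M) fun N hN => ?_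
    have : 1 ≤ v N x := hM.trans (hv hN x)
    simp [this]
  have hle : ∀ M, L 1 - L ((1 - v M)⁺) ≤ L g + ε := by
    intro M
    have h1 : 1 ≤ v M + (1 - v M)⁺ := by
      simpa using add_le_add (le_refl (v M)) (le_posPart (1 - v M))
    calc L 1 - L ((1 - v M)⁺) ≤ L (v M) := by
          rw [sub_le_iff_le_add, ← map_add]
          exact OrderHomClass.mono L h1
      _ = L g + ∑ m ∈ Finset.range M, L (φ m) := by simp [v, map_sum]
      _ ≤ L g + ε := add_le_add le_rfl (hsum M)
  exact le_of_tendsto' (by simpa using tendsto_const_nhds.sub (hL _ hw hw0)) hle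

end Topological

section Metric

variable {X : Type*} [PseudoMetricSpace X] {L : (X →ᵇ ℝ) →ₚ[ℝ] ℝ}

lemma exists_finite_cutoff [TopologicalSpace.SeparableSpace X] [Nonempty X]
    (hL : DaniellContinuous L) {r η : ℝ} (hr : 0 < r) (hη : 0 < η) :
    ∃ T : Set X, T.Finite ∧ T.Nonempty ∧
      ∃ φ : X →ᵇ ℝ, 0 ≤ φ ∧ L φ < η ∧ ∀ x, r < infDist x T → 1 ≤ φ x := by
  obtain ⟨z, hz⟩ := TopologicalSpace.exists_dense_seq X
  let T : ℕ → Set X := fun n => z '' Iic n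
  have hT : ∀ n, (T n).Nonempty := fun n => (nonempty_Iic).image z
  -- `u n` vanishes within `r / 2` of `T n` and equals `1` beyond distance `r`
  let u : ℕ → X →ᵇ ℝ := fun n => .ofNormedAddCommGroup
    (fun x => max 0 (min 1 (2 * infDist x (T n) / r - 1)))
    (by fun_prop) 1 fun x => by
      rw [Real.norm_eq_abs, abs_le]
      constructor <;> linarith [le_max_left 0 (min 1 (2 * infDist x (T n) / r - 1)),
        max_le zero_le_one (min_le_left 1 (2 * infDist x (T n) / r - 1))]
  have hu : ∀ n x, u n x = max 0 (min 1 (2 * infDist x (T n) / r - 1)) := fun _ _ => rfl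
  have hu_anti : Antitone u := fun m n hmn x => by
    show u n x ≤ u m x
    rw [hu, hu]
    gcongr
    exact infDist_le_infDist_of_subset (image_mono (Iic_subset_Iic.2 hmn)) (hT m)
  have hu0 : ∀ x, Tendsto (fun n => u n x) atTop (𝓝 0) := by
    intro x
    obtain ⟨i, hi⟩ := hz.exists_dist_lt x (half_pos hr)
    refine tendsto_atTop_of_eventually_const (i₀ := i) fun n hn => ?_
    have hd : infDist x (T n) < r / 2 :=
      (infDist_le_dist_of_mem (mem_image_of_mem z (mem_Iic.2 hn))).trans_lt hi
    have : 2 * infDist x (T n) / r - 1 < 0 := by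
      rw [sub_neg, div_lt_one hr]
      linarith
    rw [hu, max_eq_left ((min_le_right _ _).trans this.le)]
  obtain ⟨n, hn⟩ := ((hL u hu_anti hu0).eventually (gt_mem_nhds hη)).exists
  refine ⟨T n, (finite_Iic n).image z, hT n, u n, fun x => le_max_left _ _, hn, fun x hx => ?_⟩
  have : 1 < 2 * infDist x (T n) / r - 1 := by
    rw [lt_sub_iff_add_lt, lt_div_iff₀ hr]
    linarith
  rw [hu, min_eq_left this.le, max_eq_right zero_le_one]

variable [TopologicalSpace.SeparableSpace X] [Nonempty X] (hL : DaniellContinuous L)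
include hL

lemma exists_isCompact_le_daniellContentAux [CompleteSpace X] {ε : ℝ} (hε : 0 < ε) :
    ∃ K, IsCompact K ∧ L 1 - ε ≤ daniellContentAux L K := by
  choose T hT hT' φ hφ hφL hφ1 using fun m : ℕ =>
    hL.exists_finite_cutoff (r := 1 / (m + 1)) (η := ε / 2 * (1 / 2) ^ m) (by positivity)
      (by positivity)
  refine ⟨_, isCompact_iInter_infDist_le hT hT' fun δ hδ => exists_nat_one_div_lt hδ,
    le_daniellContentAux fun g hg hgK => sub_le_iff_le_add.2 ?_⟩
  -- off `K` some cutoff `φ m` is at least `1`, and the cutoffs have total mass at most `ε`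
  refine hL.map_one_le_add_of_cover hφ (fun M => ?_) hg fun x hx => ?_
  · calc ∑ m ∈ Finset.range M, L (φ m) ≤ ∑ m ∈ Finset.range M, ε / 2 * (1 / 2) ^ m :=
          Finset.sum_le_sum fun m _ => (hφL m).le
      _ ≤ ε / 2 * 2 := by
          rw [← Finset.mul_sum]
          gcongr
          exact sum_geometric_two_le M
      _ = ε := by ring
  · by_contra! h
    exact hx.not_ge (hgK x (mem_iInter.2 fun m => not_lt.1 fun hm => (h m).not_ge (hφ1 m x hm)))

variable [CompleteSpace X] [MeasurableSpace X] [BorelSpace X]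

lemma measureReal_univ_daniellMeasure : (daniellMeasure L).real univ = L 1 := by
  refine le_antisymm (daniellMeasure_real_le_of_isOpen isOpen_univ (fun _ => zero_le_one)
    fun _ _ => le_rfl) (le_of_forall_pos_le_add fun ε hε => ?_)
  obtain ⟨K, hK, hLK⟩ := hL.exists_isCompact_le_daniellContentAux hε
  linarith [daniellContentAux_le_measureReal_univ (L := L) hK]

lemma integral_daniellMeasure_le (g : X →ᵇ ℝ) : ∫ x, g x ∂daniellMeasure L ≤ L g := by
  have hg : ∀ x, 0 ≤ (g + ‖g‖ • 1) x := fun x => by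
    simpa [neg_le_iff_add_nonneg', add_comm] using neg_le_of_abs_le (g.norm_coe_le_norm x)
  have h := integral_daniellMeasure_le_of_nonneg (L := L) hg
  simp only [coe_add, coe_smul, coe_one, Pi.add_apply, Pi.one_apply, smul_eq_mul, mul_one] at h
  rw [integral_add (g.integrable _) (integrable_const _), integral_const, smul_eq_mul,
    hL.measureReal_univ_daniellMeasure, map_add, map_smul, smul_eq_mul] at h
  linarith

lemma integral_daniellMeasure (g : X →ᵇ ℝ) : ∫ x, g x ∂daniellMeasure L = L g := by
  refine (hL.integral_daniellMeasure_le g).antisymm ?_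
  have h := hL.integral_daniellMeasure_le (-g)
  simp only [coe_neg, Pi.neg_apply, integral_neg, map_neg] at h
  linarith

end Metric

theorem exists_finiteMeasure_integral_eq {X : Type*} [TopologicalSpace X] [PolishSpace X]
    [MeasurableSpace X] [BorelSpace X] {L : (X →ᵇ ℝ) →ₚ[ℝ] ℝ} (hL : DaniellContinuous L) :
    ∃ μ : FiniteMeasure X, ∀ g : X →ᵇ ℝ, ∫ x, g x ∂(μ : Measure X) = L g := by
  rcases isEmpty_or_nonempty X with hX | hX
  · exact ⟨0, fun g => by simp [show g = 0 from ext isEmptyElim]⟩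
  · let := TopologicalSpace.upgradeIsCompletelyMetrizable X
    exact ⟨⟨daniellMeasure L, inferInstance⟩, hL.integral_daniellMeasure⟩

end DaniellContinuous

lemma ConvexOn.exists_daniellContinuous_le_sub {X : Type*} [TopologicalSpace X]
    {F : (X →ᵇ ℝ) → ℝ} (hconv : ConvexOn ℝ univ F) (hmono : Monotone F)
    (hdown : ∀ (f : X →ᵇ ℝ) (g : ℕ → X →ᵇ ℝ), Antitone g →
      (∀ x, Tendsto (fun n => g n x) atTop (𝓝 (f x))) →
      Tendsto (fun n => F (g n)) atTop (𝓝 (F f)))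
    (f : X →ᵇ ℝ) : ∃ L : (X →ᵇ ℝ) →ₚ[ℝ] ℝ, DaniellContinuous L ∧ ∀ g, L g ≤ F (f + g) - F f := by
  obtain ⟨ℓ, hℓ⟩ := hconv.exists_linearMap_le_sub f
  have hpos : ∀ g, 0 ≤ g → 0 ≤ ℓ g := fun g hg => by
    have : F (f + -g) ≤ F f := hmono (add_le_of_nonpos_right (neg_nonpos.2 hg))
    linarith [hℓ (-g), map_neg ℓ g]
  refine ⟨.mk₀ ℓ hpos, fun u hu hu0 => ?_, hℓ⟩
  have hu_nonneg : ∀ n, 0 ≤ u n := fun n x =>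
    Antitone.le_of_tendsto (fun a b hab => hu hab x) (hu0 x) n
  have hF : Tendsto (fun n => F (f + u n) - F f) atTop (𝓝 0) := by
    have hfu : Antitone fun n => f + u n := fun m n hmn => add_le_add le_rfl (hu hmn)
    simpa using (hdown f _ hfu fun x => by simpa using (hu0 x).const_add (f x)).sub_const (F f)
  exact squeeze_zero (fun n => hpos _ (hu_nonneg n)) (fun n => hℓ (u n)) hF

lemma coe_integral_eq_add_conjugate13 {X : Type*} [TopologicalSpace X] [MeasurableSpace X]
    [OpensMeasurableSpace X] {F : (X →ᵇ ℝ) → ℝ} {μ : FiniteMeasure X} {f : X →ᵇ ℝ}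
    (hμ : ∀ g, ∫ x, g x ∂(μ : Measure X) ≤ F (f + g) - F f) :
    ((∫ x, f x ∂(μ : Measure X) : ℝ) : EReal) = F f + conjugate13 F μ := by
  have hconj : conjugate13 F μ = ((∫ x, f x ∂(μ : Measure X) - F f : ℝ) : EReal) := by
    refine le_antisymm (iSup_le fun h => EReal.coe_le_coe_iff.2 ?_) (le_iSup_of_le f le_rfl)
    have := hμ (h - f)
    rw [add_sub_cancel, coe_sub, Pi.sub_def, integral_sub (h.integrable _) (f.integrable _)] at this
    linarith
  rw [hconj, ← EReal.coe_add, add_sub_cancel]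

theorem stmt13_general {X : Type*} [TopologicalSpace X] [PolishSpace X]
    [MeasurableSpace X] [BorelSpace X]
    (F : (X →ᵇ ℝ) → ℝ) (hconv : ConvexOn ℝ Set.univ F) (hmono : Monotone F)
    (hdown : ∀ (f : X →ᵇ ℝ) (g : ℕ → X →ᵇ ℝ), Antitone g →
      (∀ x, Tendsto (fun n => g n x) atTop (𝓝 (f x))) →
      Tendsto (fun n => F (g n)) atTop (𝓝 (F f)))
    (f : X →ᵇ ℝ) :
    ∃ μ : FiniteMeasure X,
      ((∫ x, f x ∂(μ : Measure X) : ℝ) : EReal) = (F f : ℝ) + conjugate13 F μ ∧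
      (∀ g : X →ᵇ ℝ, F (f + g) ≥ F f + ∫ x, g x ∂(μ : Measure X)) := by
  obtain ⟨L, hL, hLF⟩ := hconv.exists_daniellContinuous_le_sub hmono hdown f
  obtain ⟨μ, hμ⟩ := hL.exists_finiteMeasure_integral_eq
  have hsub : ∀ g, ∫ x, g x ∂(μ : Measure X) ≤ F (f + g) - F f := fun g => (hμ g).trans_le (hLF g)
  exact ⟨μ, coe_integral_eq_add_conjugate13 hsub, fun g => by linarith [hsub g]⟩

/-- For a convex nondecreasing downward continuous `F : C_b(X) → ℝ` with
`F 0 = 0` on a Polish space, for every `f` there is a finite nonnegative Borel measure `μ`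
with `∫ f dμ = F(f) + F*(μ)`; equivalently `F(f + g) ≥ F(f) + ∫ g dμ` for all `g`, i.e. the
epigraph of `F` has a supporting functional at `(f, F(f))`. -/
theorem stmt13 {X : Type*} [TopologicalSpace X] [PolishSpace X]
    [MeasurableSpace X] [BorelSpace X]
    (F : (X →ᵇ ℝ) → ℝ) (hconv : ConvexOn ℝ Set.univ F) (hmono : Monotone F)
    (hF0 : F 0 = 0)
    (hdown : ∀ (f : X →ᵇ ℝ) (g : ℕ → X →ᵇ ℝ), Antitone g →
      (∀ x, Tendsto (fun n => g n x) atTop (𝓝 (f x))) →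
      Tendsto (fun n => F (g n)) atTop (𝓝 (F f)))
    (f : X →ᵇ ℝ) :
    ∃ μ : FiniteMeasure X,
      ((∫ x, f x ∂(μ : Measure X) : ℝ) : EReal) = (F f : ℝ) + conjugate13 F μ ∧
      (∀ g : X →ᵇ ℝ, F (f + g) ≥ F f + ∫ x, g x ∂(μ : Measure X)) :=
  stmt13_general F hconv hmono hdown f
end

section
/- Let E be a set, G ⊆ E a nonempty subset, and (f_k)_{k≥1} a uniformly bounded sequence of functions f_k : E → ℝ. Let conv_σ(f_k ; k ≥ 1) = {Σ_{k≥1} λ_k f_k : λ_k ≥ 0, Σ_k λ_k = 1} denote the set of countable convex combinations of the f_k. Suppose that for every f ∈ conv_σ(f_k ; k ≥ 1) there exists x ∈ G with f(x) = sup_{y ∈ E} f(y). Then sup{limsup_k f_k(x) : x ∈ G} = sup{limsup_k f_k(x) : x ∈ E}. -/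
/-!
Simons' recursive construction. Let `A ⊆ ℕ` be infinite and such that `sup_E ∑ λ_k f_k ≥ p` for
every σ-convex `λ` supported in `A` (for `A = {k | f_k x > limsup_k f_k x - ε}` the point `x`
itself is a witness). Choose recursively σ-convex combinations `g_n` of `(f_k)_{k ∈ A, k ≥ n}`
such that `g_n` minimises `sup_E (h_n + 2^{-n} g)` up to `ε 4^{-n} / 2`, where
`h_n = ∑_{m<n} 2^{-(m+1)} g_m`. The combination `T = ∑_m 2^{-(m+1)} g_m` splits as
`h_n + 2^{-n} R_n` with `R_n` again a combination of `(f_k)_{k ∈ A, k ≥ n}`; `T` attains its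
supremum `S ≥ p` at some `b ∈ G`, and comparing `g_n` with the competitor `R_n` gives
`h_n(b) + 2^{-n} g_n(b) ≤ S + ε 4^{-n} / 2`. As `h_{n+1}` is the average of `h_n` and
`h_n + 2^{-n} g_n`, induction gives `h_n(b) ≤ (1 - 2^{-n}) (S + ε 2^{-n})`, i.e. `R_n(b) ≥ S - ε`
for all `n`, which forces `limsup_k f_k(b) ≥ p - ε`.
-/

open Filter Topology Finset Function Set

structure IsConvexWeight (lam : ℕ → ℝ) : Prop where
  nonneg : ∀ k, 0 ≤ lam k
  tsum_eq_one : ∑' k, lam k = 1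

namespace IsConvexWeight

variable {lam w : ℕ → ℝ} {Λ : ℕ → ℕ → ℝ} {a : ℕ → ℝ} {C M : ℝ}

lemma summable (hw : IsConvexWeight lam) : Summable lam := by
  by_contra hs
  simpa [tsum_eq_zero_of_not_summable hs] using hw.tsum_eq_one

lemma summable_mul (hw : IsConvexWeight lam) (ha : ∀ k, |a k| ≤ C) :
    Summable fun k => lam k * a k :=
  .of_norm_bounded (hw.summable.mul_right C) fun k => by
    rw [Real.norm_eq_abs, abs_mul, abs_of_nonneg (hw.nonneg k)]
    exact mul_le_mul_of_nonneg_left (ha k) (hw.nonneg k)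

lemma tsum_mul_le (hw : IsConvexWeight lam) (ha : ∀ k, |a k| ≤ C)
    (hM : ∀ k, lam k ≠ 0 → a k ≤ M) : ∑' k, lam k * a k ≤ M :=
  calc ∑' k, lam k * a k ≤ ∑' k, lam k * M := by
        refine (hw.summable_mul ha).tsum_le_tsum (fun k => ?_) (hw.summable.mul_right M)
        rcases eq_or_ne (lam k) 0 with h | h
        · simp [h]
        · exact mul_le_mul_of_nonneg_left (hM k h) (hw.nonneg k)
    _ = M := by rw [tsum_mul_right, hw.tsum_eq_one, one_mul]

lemma le_tsum_mul (hw : IsConvexWeight lam) (ha : ∀ k, |a k| ≤ C)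
    (hM : ∀ k, lam k ≠ 0 → M ≤ a k) : M ≤ ∑' k, lam k * a k := by
  have := hw.tsum_mul_le (a := -a) (by simpa using ha) fun k hk => neg_le_neg (hM k hk)
  simpa [tsum_neg] using neg_le_neg this

lemma abs_tsum_mul_le (hw : IsConvexWeight lam) (ha : ∀ k, |a k| ≤ C) :
    |∑' k, lam k * a k| ≤ C :=
  abs_le.2 ⟨hw.le_tsum_mul ha fun k _ => (abs_le.1 (ha k)).1,
    hw.tsum_mul_le ha fun k _ => (abs_le.1 (ha k)).2⟩

lemma tsum_tsum_mul_comm (hw : IsConvexWeight w) (hΛ : ∀ n, IsConvexWeight (Λ n))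
    (ha : ∀ k, |a k| ≤ C) :
    ∑' k, (∑' n, w n * Λ n k) * a k = ∑' n, w n * ∑' k, Λ n k * a k := by
  have hwΛ : Summable fun p : ℕ × ℕ => w p.1 * Λ p.1 p.2 := by
    refine (summable_prod_of_nonneg fun p => mul_nonneg (hw.nonneg _) ((hΛ _).nonneg _)).2
      ⟨fun n => (hΛ n).summable.mul_left (w n), ?_⟩
    simpa only [tsum_mul_left, (hΛ _).tsum_eq_one, mul_one] using hw.summable
  have hwΛa : Summable (uncurry fun n k => w n * Λ n k * a k) :=
    .of_norm_bounded (hwΛ.mul_right C) fun p => by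
      have := mul_nonneg (hw.nonneg p.1) ((hΛ p.1).nonneg p.2)
      rw [uncurry_apply_pair, Real.norm_eq_abs, abs_mul, abs_of_nonneg this]
      exact mul_le_mul_of_nonneg_left (ha _) this
  simp_rw [← tsum_mul_right, ← tsum_mul_left, ← mul_assoc]
  exact hwΛa.tsum_comm

lemma tsum_mul (hw : IsConvexWeight w) (hΛ : ∀ n, IsConvexWeight (Λ n)) :
    IsConvexWeight fun k => ∑' n, w n * Λ n k where
  nonneg k := tsum_nonneg fun n => mul_nonneg (hw.nonneg n) ((hΛ n).nonneg k)
  tsum_eq_one := by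
    simpa [(hΛ _).tsum_eq_one, hw.tsum_eq_one] using
      hw.tsum_tsum_mul_comm hΛ (a := fun _ => 1) (C := 1) (by simp)

end IsConvexWeight

lemma support_tsum_mul_subset {w : ℕ → ℝ} {Λ : ℕ → ℕ → ℝ} {s : Set ℕ}
    (h : ∀ n, support (Λ n) ⊆ s) : support (fun k => ∑' n, w n * Λ n k) ⊆ s :=
  support_subset_iff'.2 fun k hk => by
    simp [support_subset_iff'.1 (h _) k hk]

lemma isConvexWeight_single (i : ℕ) : IsConvexWeight (Pi.single i 1) where
  nonneg k := by rw [Pi.single_apply]; split_ifs <;> norm_num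
  tsum_eq_one := tsum_pi_single i 1

lemma isConvexWeight_geometric : IsConvexWeight fun j => (2⁻¹ : ℝ) ^ (j + 1) where
  nonneg j := by positivity
  tsum_eq_one := by
    simp_rw [pow_succ, tsum_mul_right, tsum_geometric_inv_two]
    norm_num

section Geometric

variable {a : ℕ → ℝ} {C s ε : ℝ}

lemma tsum_geometric_mul_eq_sum_add (ha : ∀ m, |a m| ≤ C) (n : ℕ) :
    ∑' m, (2⁻¹ : ℝ) ^ (m + 1) * a m =
      ∑ m ∈ range n, (2⁻¹ : ℝ) ^ (m + 1) * a m +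
        (2⁻¹ : ℝ) ^ n * ∑' j, (2⁻¹ : ℝ) ^ (j + 1) * a (n + j) := by
  rw [← (isConvexWeight_geometric.summable_mul ha).sum_add_tsum_nat_add n, ← tsum_mul_left]
  congr 1
  refine tsum_congr fun j => ?_
  rw [add_comm j n]
  ring

lemma sum_range_geometric_mul_le
    (h : ∀ n, ∑ m ∈ range n, (2⁻¹ : ℝ) ^ (m + 1) * a m + (2⁻¹ : ℝ) ^ n * a n ≤
      s + ε * ((2⁻¹ : ℝ) ^ n) ^ 2 / 2) (n : ℕ) :
    ∑ m ∈ range n, (2⁻¹ : ℝ) ^ (m + 1) * a m ≤ (1 - (2⁻¹ : ℝ) ^ n) * (s + ε * (2⁻¹ : ℝ) ^ n) := by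
  induction n with
  | zero => simp
  | succ n ih =>
    rw [sum_range_succ, pow_succ]
    linear_combination (ih + h n) / 2

lemma sub_le_tsum_geometric_tail (ha : ∀ m, |a m| ≤ C) (hε : 0 ≤ ε)
    (h : ∀ n, ∑ m ∈ range n, (2⁻¹ : ℝ) ^ (m + 1) * a m + (2⁻¹ : ℝ) ^ n * a n ≤
      ∑' m, (2⁻¹ : ℝ) ^ (m + 1) * a m + ε * ((2⁻¹ : ℝ) ^ n) ^ 2 / 2) (n : ℕ) :
    ∑' m, (2⁻¹ : ℝ) ^ (m + 1) * a m - ε ≤ ∑' j, (2⁻¹ : ℝ) ^ (j + 1) * a (n + j) := by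
  have hsplit := tsum_geometric_mul_eq_sum_add ha n
  have hpartial := sum_range_geometric_mul_le h n
  have hc : (0 : ℝ) < (2⁻¹ : ℝ) ^ n := by positivity
  refine le_of_mul_le_mul_left ?_ hc
  nlinarith [mul_nonneg hε (sq_nonneg ((2⁻¹ : ℝ) ^ n))]

end Geometric

lemma le_limsup_of_forall_tsum_mul {a : ℕ → ℝ} {C r : ℝ} (ha : ∀ k, |a k| ≤ C)
    (h : ∀ n, ∃ lam, IsConvexWeight lam ∧ support lam ⊆ Ici n ∧ r ≤ ∑' k, lam k * a k) :
    r ≤ limsup a atTop := by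
  by_contra! hlt
  obtain ⟨q, hq, hqr⟩ := exists_between hlt
  have hbdd : IsBoundedUnder (· ≤ ·) atTop a := isBoundedUnder_of ⟨C, fun k => le_of_abs_le (ha k)⟩
  obtain ⟨N, hN⟩ := eventually_atTop.1 (eventually_lt_of_limsup_lt hq hbdd)
  obtain ⟨lam, hw, hsupp, hr⟩ := h N
  have : ∑' k, lam k * a k ≤ q := hw.tsum_mul_le ha fun k hk => (hN k (hsupp hk)).le
  linarith

lemma exists_mem_near_min {α : Type*} {s : Set α} (φ : α → ℝ) (hs : s.Nonempty) {d : ℝ}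
    (hd : 0 < d) :
    ∃ a ∈ s, BddBelow (φ '' s) → ∀ b ∈ s, φ a ≤ φ b + d := by
  by_cases hφ : BddBelow (φ '' s)
  · obtain ⟨_, ⟨a, has, rfl⟩, ha⟩ := exists_lt_of_csInf_lt (hs.image φ) (lt_add_of_pos_right _ hd)
    exact ⟨a, has, fun _ b hb => by linarith [csInf_le hφ (mem_image_of_mem φ hb)]⟩
  · exact ⟨hs.some, hs.some_mem, fun h => absurd h hφ⟩

lemma exists_seq_forall_sum_range {α β : Type*} [AddCommMonoid β] (g : ℕ → α → β)
    (P : ℕ → β → α → Prop) (hP : ∀ n b, ∃ a, P n b a) :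
    ∃ a : ℕ → α, ∀ n, P n (∑ m ∈ range n, g m (a m)) (a n) := by
  choose F hF using hP
  let s : ℕ → β := fun n => Nat.rec 0 (fun m sm => sm + g m (F m sm)) n
  refine ⟨fun n => F n (s n), fun n => ?_⟩
  have hs : ∀ n, s n = ∑ m ∈ range n, g m (F m (s m)) := fun n => by
    induction n with
    | zero => rfl
    | succ n ih => rw [sum_range_succ, ← ih]
  rw [← hs]
  exact hF n (s n)

section Recursion

variable {E : Type*} {f : ℕ → E → ℝ} {C : ℝ}

lemma bddAbove_range_add_mul_tsum (hbdd : ∀ k x, |f k x| ≤ C) {h : E → ℝ} (hh : BddAbove (range h))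
    {c : ℝ} (hc : 0 ≤ c) {lam : ℕ → ℝ} (hw : IsConvexWeight lam) :
    BddAbove (range fun y => h y + c * ∑' k, lam k * f k y) := by
  obtain ⟨B, hB⟩ := hh
  refine ⟨B + c * C, forall_mem_range.2 fun y => add_le_add (hB (mem_range_self y)) ?_⟩
  exact mul_le_mul_of_nonneg_left (le_of_abs_le (hw.abs_tsum_mul_le fun k => hbdd k y)) hc

lemma exists_seq_near_min_iSup (hbdd : ∀ k x, |f k x| ≤ C) (W : ℕ → Set (ℕ → ℝ))
    (hW : ∀ n, (W n).Nonempty) (hWc : ∀ n, ∀ lam ∈ W n, IsConvexWeight lam)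
    {δ : ℕ → ℝ} (hδ : ∀ n, 0 < δ n) :
    ∃ Λ : ℕ → ℕ → ℝ, ∀ n, Λ n ∈ W n ∧ ∀ lam ∈ W n, ∀ y,
      ∑ m ∈ range n, (2⁻¹ : ℝ) ^ (m + 1) * ∑' k, Λ m k * f k y +
          (2⁻¹ : ℝ) ^ n * ∑' k, Λ n k * f k y ≤
        (⨆ z, ∑ m ∈ range n, (2⁻¹ : ℝ) ^ (m + 1) * ∑' k, Λ m k * f k z +
          (2⁻¹ : ℝ) ^ n * ∑' k, lam k * f k z) + δ n := by
  let φ : ℕ → (E → ℝ) → (ℕ → ℝ) → ℝ := fun n h lam =>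
    ⨆ z, h z + (2⁻¹ : ℝ) ^ n * ∑' k, lam k * f k z
  obtain ⟨Λ, hΛ⟩ := exists_seq_forall_sum_range
    (fun m lam y => (2⁻¹ : ℝ) ^ (m + 1) * ∑' k, lam k * f k y)
    (fun n h lam => lam ∈ W n ∧
      (BddBelow (φ n h '' W n) → ∀ lam' ∈ W n, φ n h lam ≤ φ n h lam' + δ n))
    fun n h => exists_mem_near_min (φ n h) (hW n) (hδ n)
  refine ⟨Λ, fun n => ⟨(hΛ n).1, fun lam hlam y => ?_⟩⟩
  set H := ∑ m ∈ range n, fun y => (2⁻¹ : ℝ) ^ (m + 1) * ∑' k, Λ m k * f k y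
  have hH : BddAbove (range H) := by
    refine ⟨∑ m ∈ range n, (2⁻¹ : ℝ) ^ (m + 1) * C, forall_mem_range.2 fun z => ?_⟩
    simp only [H, Finset.sum_apply]
    refine sum_le_sum fun m _ => mul_le_mul_of_nonneg_left ?_ (by positivity)
    exact le_of_abs_le ((hWc m _ (hΛ m).1).abs_tsum_mul_le fun k => hbdd k z)
  have hc : (0 : ℝ) ≤ (2⁻¹ : ℝ) ^ n := by positivity
  have hφ_bdd : BddBelow (φ n H '' W n) := by
    refine ⟨H y - (2⁻¹ : ℝ) ^ n * C, forall_mem_image.2 fun lam' hlam' => ?_⟩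
    have := (hWc n lam' hlam').abs_tsum_mul_le fun k => hbdd k y
    refine le_trans ?_ (le_ciSup (bddAbove_range_add_mul_tsum hbdd hH hc (hWc n lam' hlam')) y)
    nlinarith [abs_le.1 this]
  have := le_trans (le_ciSup (bddAbove_range_add_mul_tsum hbdd hH hc (hWc n _ (hΛ n).1)) y)
    ((hΛ n).2 hφ_bdd lam hlam)
  simpa only [H, φ, Finset.sum_apply] using this

end Recursion

theorem exists_mem_sub_le_limsup {E : Type*} (G : Set E) (f : ℕ → E → ℝ) (C : ℝ)
    (hbdd : ∀ k x, |f k x| ≤ C)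
    (hpeak : ∀ lam, IsConvexWeight lam →
      ∃ x ∈ G, ∀ y, ∑' k, lam k * f k y ≤ ∑' k, lam k * f k x)
    {A : Set ℕ} (hA : A.Infinite) {p ε : ℝ} (hε : 0 < ε)
    (hp : ∀ lam, IsConvexWeight lam → support lam ⊆ A → ∃ y, p ≤ ∑' k, lam k * f k y) :
    ∃ b ∈ G, p - ε ≤ limsup (fun k => f k b) atTop := by
  let W : ℕ → Set (ℕ → ℝ) := fun n => {lam | IsConvexWeight lam ∧ support lam ⊆ A ∩ Ici n}
  have hW : ∀ n, (W n).Nonempty := fun n => by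
    obtain ⟨i, hiA, hni⟩ := hA.exists_gt n
    refine ⟨Pi.single i 1, isConvexWeight_single i, ?_⟩
    rw [Pi.support_single_of_ne one_ne_zero]
    exact singleton_subset_iff.2 ⟨hiA, hni.le⟩
  obtain ⟨Λ, hΛ⟩ := exists_seq_near_min_iSup hbdd W hW (fun n _ h => h.1)
    (δ := fun n => ε * ((2⁻¹ : ℝ) ^ n) ^ 2 / 2) fun n => by positivity
  set g : ℕ → E → ℝ := fun m y => ∑' k, Λ m k * f k y
  have hg : ∀ y m, |g m y| ≤ C := fun y m => (hΛ m).1.1.abs_tsum_mul_le fun k => hbdd k y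
  let ν : ℕ → ℕ → ℝ := fun n k => ∑' j, (2⁻¹ : ℝ) ^ (j + 1) * Λ (n + j) k
  have hνW : ∀ n, ν n ∈ W n := fun n =>
    ⟨isConvexWeight_geometric.tsum_mul fun j => (hΛ (n + j)).1.1,
      support_tsum_mul_subset fun j => (hΛ (n + j)).1.2.trans
        (inter_subset_inter_right _ (Ici_subset_Ici.2 (Nat.le_add_right n j)))⟩
  have hν : ∀ n y, ∑' k, ν n k * f k y = ∑' j, (2⁻¹ : ℝ) ^ (j + 1) * g (n + j) y := fun n y =>
    isConvexWeight_geometric.tsum_tsum_mul_comm (fun j => (hΛ (n + j)).1.1) fun k => hbdd k y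
  obtain ⟨b, hbG, hb⟩ := hpeak (ν 0) (hνW 0).1
  have : Nonempty E := ⟨b⟩
  have hnear : ∀ n, ∑ m ∈ range n, (2⁻¹ : ℝ) ^ (m + 1) * g m b + (2⁻¹ : ℝ) ^ n * g n b ≤
      ∑' m, (2⁻¹ : ℝ) ^ (m + 1) * g m b + ε * ((2⁻¹ : ℝ) ^ n) ^ 2 / 2 := fun n => by
    refine ((hΛ n).2 (ν n) (hνW n) b).trans (add_le_add (ciSup_le fun y => ?_) le_rfl)
    have := hb y
    rw [hν, hν 0] at this
    rw [hν, ← tsum_geometric_mul_eq_sum_add (hg y) n]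
    simpa using this
  obtain ⟨y, hy⟩ := hp (ν 0) (hνW 0).1 fun k hk => ((hνW 0).2 hk).1
  refine ⟨b, hbG, le_limsup_of_forall_tsum_mul (fun k => hbdd k b) fun n =>
    ⟨ν n, (hνW n).1, fun k hk => ((hνW n).2 hk).2, ?_⟩⟩
  have hpb : p ≤ ∑' k, ν 0 k * f k b := hy.trans (hb y)
  rw [hν 0] at hpb
  rw [hν]
  simp only [zero_add] at hpb
  linarith [sub_le_tsum_geometric_tail (hg b) hε.le hnear n]

/-- sup-limsup theorem of Galán and Simons: Let `E` be a set, `G ⊆ E` nonempty,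
and `(f_k)` a uniformly bounded sequence of real functions on `E`. If every countable convex
combination `∑ λ_k f_k` attains its supremum over `E` at some point of `G`, then
`sup {limsup_k f_k(x) : x ∈ G} = sup {limsup_k f_k(x) : x ∈ E}`. -/
theorem stmt14 {E : Type*} (G : Set E) (hG : G.Nonempty)
    (f : ℕ → E → ℝ) (C : ℝ) (hbdd : ∀ (k : ℕ) (x : E), |f k x| ≤ C)
    (hpeak : ∀ lam : ℕ → ℝ, (∀ k, 0 ≤ lam k) → (∑' k, lam k) = 1 →
      ∃ x ∈ G, ∀ y : E, (∑' k, lam k * f k y) ≤ ∑' k, lam k * f k x) :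
    sSup ((fun x => limsup (fun k => f k x) atTop) '' G) =
      sSup (Set.range fun x : E => limsup (fun k => f k x) atTop) := by
  have hcobdd : ∀ x, IsCoboundedUnder (· ≤ ·) atTop fun k => f k x := fun x =>
    (isBoundedUnder_of ⟨-C, fun k => (abs_le.1 (hbdd k x)).1⟩).isCoboundedUnder_le
  have hbddAbove : BddAbove (range fun x => limsup (fun k => f k x) atTop) :=
    ⟨C, forall_mem_range.2 fun x =>
      limsup_le_of_le (hcobdd x) (.of_forall fun k => le_of_abs_le (hbdd k x))⟩
  refine le_antisymm (csSup_le_csSup hbddAbove (hG.image _) (image_subset_range _ _))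
    (csSup_le ⟨_, mem_range_self hG.some⟩ ?_)
  rintro _ ⟨x, rfl⟩
  refine le_of_forall_pos_le_add fun ε hε => ?_
  have hA : {k | limsup (fun k => f k x) atTop - ε / 2 < f k x}.Infinite :=
    Nat.frequently_atTop_iff_infinite.1 (frequently_lt_of_lt_limsup (hcobdd x) (by linarith))
  obtain ⟨b, hbG, hb⟩ := exists_mem_sub_le_limsup G f C hbdd
    (fun lam hw => hpeak lam hw.nonneg hw.tsum_eq_one) hA (half_pos hε)
    fun lam hw hsupp => ⟨x, hw.le_tsum_mul (fun k => hbdd k x) fun k hk => (hsupp hk).le⟩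
  linarith [le_csSup (hbddAbove.mono (image_subset_range _ _)) (mem_image_of_mem _ hbG)]
end

section
/- Let (K, d) be a compact metric space, let X ⊆ K be a dense subset that is Polish in the induced topology, and let F : C_b(X) → ℝ be a convex nondecreasing downward continuous function with F(0) = 0. If μ is a finite nonnegative Borel measure on K with μ(K \ X) > 0, then sup{∫_K f dμ − F(f|_X) : f ∈ C(K)} = +∞. -/
/-!
Since `X` is Polish it is Borel, so inner regularity yields a compact `C ⊆ K \ X` with
`μ C > 0`. For `n` large, `n` times the thickened indicators of `C` of radius `1 / (m + 1)`
have integral at least `n μ(C)`, while their restrictions to `X` decrease pointwise to `0`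
because `X` misses the closed set `C`; by downward continuity and `F 0 = 0`, their `F`-values
eventually drop below `1`.
-/

open MeasureTheory BoundedContinuousFunction Filter Topology

/-- Restriction of a continuous function on a compact metric space `K` to a subset `X ⊆ K`,
as a bounded continuous function on `X`. -/
noncomputable def restrictBCF {K : Type*} [TopologicalSpace K] [CompactSpace K]
    (X : Set K) (f : C(K, ℝ)) : X →ᵇ ℝ :=
  (BoundedContinuousFunction.mkOfCompact f).compContinuous
    ⟨Subtype.val, continuous_subtype_val⟩

open NNReal Set

@[simp]
theorem restrictBCF_apply {K : Type*} [TopologicalSpace K] [CompactSpace K] (X : Set K)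
    (f : C(K, ℝ)) (x : X) : restrictBCF X f x = f x :=
  rfl

def DownwardContinuous {Y : Type*} [TopologicalSpace Y] (F : (Y →ᵇ ℝ) → ℝ) : Prop :=
  ∀ (f : Y →ᵇ ℝ) (g : ℕ → Y →ᵇ ℝ), Antitone g →
    (∀ y, Tendsto (fun n => g n y) atTop (𝓝 (f y))) → Tendsto (fun n => F (g n)) atTop (𝓝 (F f))

section ThickenedIndicatorSeq

variable {K : Type*} [PseudoEMetricSpace K]

noncomputable def thickenedIndicatorSeq (C : Set K) (m : ℕ) : C(K, ℝ) :=
  (ContinuousMap.mk ((↑) : ℝ≥0 → ℝ) continuous_coe).comp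
    (thickenedIndicator (Nat.one_div_pos_of_nat (n := m)) C).toContinuousMap

theorem thickenedIndicatorSeq_apply (C : Set K) (m : ℕ) (x : K) :
    thickenedIndicatorSeq C m x = thickenedIndicator (Nat.one_div_pos_of_nat (n := m)) C x :=
  rfl

theorem thickenedIndicatorSeq_nonneg (C : Set K) (m : ℕ) (x : K) :
    0 ≤ thickenedIndicatorSeq C m x :=
  NNReal.coe_nonneg _

theorem thickenedIndicatorSeq_of_mem {C : Set K} (m : ℕ) {x : K} (hx : x ∈ C) :
    thickenedIndicatorSeq C m x = 1 := by
  simp [thickenedIndicatorSeq_apply, thickenedIndicator_one _ C hx]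

theorem antitone_thickenedIndicatorSeq (C : Set K) (x : K) :
    Antitone fun m => thickenedIndicatorSeq C m x := fun m m' hmm' => by
  simp only [thickenedIndicatorSeq_apply, NNReal.coe_le_coe]
  refine thickenedIndicator_mono _ _ ?_ C x
  gcongr

theorem tendsto_thickenedIndicatorSeq_of_notMem {C : Set K} (hC : IsClosed C) {x : K}
    (hx : x ∉ C) : Tendsto (fun m => thickenedIndicatorSeq C m x) atTop (𝓝 0) := by
  have key := tendsto_pi_nhds.1 (thickenedIndicator_tendsto_indicator_closure
    (fun _ => Nat.one_div_pos_of_nat) tendsto_one_div_add_atTop_nhds_zero_nat C) x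
  rw [hC.closure_eq, indicator_of_notMem hx] at key
  exact NNReal.tendsto_coe.2 key

end ThickenedIndicatorSeq

theorem exists_continuousMap_eqOn_restrictBCF_lt {K : Type*} [PseudoEMetricSpace K]
    [CompactSpace K] {X C : Set K} {F : (X →ᵇ ℝ) → ℝ} (hdown : DownwardContinuous F)
    (hF0 : F 0 = 0) (hC : IsClosed C) (hCX : Disjoint C X) {c : ℝ} (hc : 0 ≤ c) {ε : ℝ}
    (hε : 0 < ε) :
    ∃ f : C(K, ℝ), 0 ≤ f ∧ EqOn f (fun _ => c) C ∧ F (restrictBCF X f) < ε := by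
  have hlim : Tendsto (fun m => F (restrictBCF X (c • thickenedIndicatorSeq C m))) atTop
      (𝓝 0) := by
    rw [← hF0]
    refine hdown _ _ (fun m m' hmm' x => ?_) (fun x => ?_)
    · exact mul_le_mul_of_nonneg_left (antitone_thickenedIndicatorSeq C x hmm') hc
    · simpa using (tendsto_thickenedIndicatorSeq_of_notMem hC
        (hCX.notMem_of_mem_right x.2)).const_mul c
  obtain ⟨m, hm⟩ := (hlim.eventually (gt_mem_nhds hε)).exists
  exact ⟨c • thickenedIndicatorSeq C m,
    fun x => mul_nonneg hc (thickenedIndicatorSeq_nonneg C m x),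
    fun x hx => by simp [thickenedIndicatorSeq_of_mem m hx], hm⟩

theorem measureReal_mul_le_integral_of_eqOn {α : Type*} [MeasurableSpace α] {μ : Measure α}
    {f : α → ℝ} {s : Set α} {c : ℝ} (hf : Integrable f μ) (hf0 : 0 ≤ f)
    (hfs : EqOn f (fun _ => c) s) (hs : MeasurableSet s) :
    μ.real s * c ≤ ∫ x, f x ∂μ :=
  calc μ.real s * c = ∫ x in s, f x ∂μ := by
        rw [setIntegral_congr_fun hs hfs, setIntegral_const, smul_eq_mul]
    _ ≤ ∫ x, f x ∂μ := setIntegral_le_integral hf (ae_of_all _ hf0)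

theorem measurableSet_of_polishSpace {K : Type*} [TopologicalSpace K] [T2Space K]
    [MeasurableSpace K] [BorelSpace K] (X : Set K) [PolishSpace X] : MeasurableSet X := by
  simpa using measurableSet_range_of_continuous_injective continuous_subtype_val
    Subtype.val_injective (f := ((↑) : X → K))

theorem stmt16_general {K : Type*} [MetricSpace K] [CompactSpace K]
    [MeasurableSpace K] [BorelSpace K]
    (X : Set K) [PolishSpace X]
    (F : ((X : Set K) →ᵇ ℝ) → ℝ)
    (hF0 : F 0 = 0)
    (hdown : ∀ (f : (X : Set K) →ᵇ ℝ) (g : ℕ → (X : Set K) →ᵇ ℝ), Antitone g →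
      (∀ x, Tendsto (fun n => g n x) atTop (𝓝 (f x))) →
      Tendsto (fun n => F (g n)) atTop (𝓝 (F f)))
    (μ : Measure K) [IsFiniteMeasure μ] (hμX : 0 < μ Xᶜ) :
    ∀ M : ℝ, ∃ f : C(K, ℝ), M < ∫ x, f x ∂μ - F (restrictBCF X f) := by
  intro M
  obtain ⟨C, hCX, hC, hμC⟩ := (measurableSet_of_polishSpace X).compl.exists_lt_isCompact hμX
  have hμC_real : 0 < μ.real C := ENNReal.toReal_pos hμC.ne' (measure_ne_top μ C)
  obtain ⟨n, hn⟩ := exists_nat_gt ((M + 1) / μ.real C)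
  rw [div_lt_iff₀ hμC_real] at hn
  obtain ⟨f, hf0, hfC, hfF⟩ := exists_continuousMap_eqOn_restrictBCF_lt hdown hF0 hC.isClosed
    (subset_compl_iff_disjoint_right.1 hCX) n.cast_nonneg one_pos
  have hlower := measureReal_mul_le_integral_of_eqOn (f := f) ((mkOfCompact f).integrable μ) hf0 hfC
    hC.measurableSet
  exact ⟨f, by linarith⟩

/-- Let `K` be a compact metric space, `X ⊆ K` a dense Polish subset, and
`F : C_b(X) → ℝ` convex, nondecreasing, downward continuous with `F 0 = 0`. If `μ` is a finite
nonnegative Borel measure on `K` with `μ(K \ X) > 0`, then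
`sup {∫_K f dμ - F(f|_X) : f ∈ C(K)} = +∞`. -/
theorem stmt16 {K : Type*} [MetricSpace K] [CompactSpace K]
    [MeasurableSpace K] [BorelSpace K]
    (X : Set K) (hX : Dense X) [PolishSpace X]
    (F : ((X : Set K) →ᵇ ℝ) → ℝ) (hconv : ConvexOn ℝ Set.univ F) (hmono : Monotone F)
    (hF0 : F 0 = 0)
    (hdown : ∀ (f : (X : Set K) →ᵇ ℝ) (g : ℕ → (X : Set K) →ᵇ ℝ), Antitone g →
      (∀ x, Tendsto (fun n => g n x) atTop (𝓝 (f x))) →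
      Tendsto (fun n => F (g n)) atTop (𝓝 (F f)))
    (μ : Measure K) [IsFiniteMeasure μ] (hμX : 0 < μ Xᶜ) :
    ∀ M : ℝ, ∃ f : C(K, ℝ), M < ∫ x, f x ∂μ - F (restrictBCF X f) :=
  stmt16_general X F hF0 hdown μ hμX
end

section
/- Let X be a Polish space and let F : C(X) → ℝ be a convex nondecreasing function with F(0) = 0. Then F satisfies the downward continuity property: for every sequence f_n ∈ C(X) with f_n ↓ f ∈ C(X) pointwise on X, one has F(f_n) ↓ F(f). -/
/-!
Monotonicity gives `F f ≤ F (g k)`. For the upper bound fix `δ > 0`. The functions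
`k * (g k - f - δ)₊` vanish for `k ≥ m` on the open set `{g m - f < δ}`, and these sets cover `X`
by pointwise convergence, so their sum `W` is a locally finite sum and hence continuous. Then
`g k ≤ f + δ + W / k`, and convexity makes `t ↦ F (a + t • h)` a convex, hence continuous,
function of a real variable: letting first `k → ∞` and then `δ → 0` gives `F (g k) < F f + ε`
eventually.
-/

open Filter Topology

theorem ConvexOn.continuous_add_smul {E : Type*} [AddCommGroup E] [Module ℝ E] {F : E → ℝ}
    (hF : ConvexOn ℝ Set.univ F) (a h : E) : Continuous fun t : ℝ => F (a + t • h) := by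
  have : ConvexOn ℝ Set.univ fun t : ℝ => F (a + t • h) :=
    (hF.translate_right a).comp_linearMap (LinearMap.toSpanSingleton ℝ E h)
  exact continuousOn_univ.1 (this.continuousOn isOpen_univ)

section

variable {X : Type*} [TopologicalSpace X] {f : C(X, ℝ)} {g : ℕ → C(X, ℝ)}

theorem exists_continuous_natCast_mul_sub_le (hg : Antitone g)
    (hgf : ∀ x, Tendsto (fun n => g n x) atTop (𝓝 (f x))) {δ : ℝ} (hδ : 0 < δ) :
    ∃ W : C(X, ℝ), ∀ (k : ℕ) (x : X), k * (g k x - f x - δ) ≤ W x := by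
  set t : ℕ → X → ℝ := fun k x => k * max (g k x - f x - δ) 0
  have t_nonneg (k : ℕ) (x : X) : 0 ≤ t k x := by positivity
  have t_eq_zero {m k : ℕ} (hmk : m ≤ k) {x : X} (hx : g m x - f x < δ) : t k x = 0 := by
    have : g k x ≤ g m x := hg hmk x
    simp [t, show g k x - f x - δ ≤ 0 by linarith]
  have hfin : LocallyFinite fun k => Function.support (t k) := by
    intro x
    obtain ⟨m, hm⟩ := ((hgf x).eventually (gt_mem_nhds (lt_add_of_pos_right (f x) hδ))).exists
    refine ⟨{y | g m y - f y < δ}, isOpen_lt (by fun_prop) continuous_const |>.mem_nhds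
      (show g m x - f x < δ by linarith), (Set.finite_lt_nat m).subset ?_⟩
    rintro k ⟨y, hyk, hym⟩
    by_contra hmk
    exact hyk (t_eq_zero (not_lt.1 hmk) hym)
  refine ⟨⟨fun x => ∑ᶠ k, t k x, continuous_finsum (fun k => by fun_prop) hfin⟩, fun k x => ?_⟩
  calc k * (g k x - f x - δ) ≤ t k x := mul_le_mul_of_nonneg_left (le_max_left _ _) k.cast_nonneg
    _ ≤ ∑ᶠ k, t k x := single_le_finsum k (hfin.point_finite x) (t_nonneg · x)

theorem ConvexOn.eventually_lt_of_antitone {F : C(X, ℝ) → ℝ} (hF : ConvexOn ℝ Set.univ F)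
    (hF' : Monotone F) (hg : Antitone g) (hgf : ∀ x, Tendsto (fun n => g n x) atTop (𝓝 (f x)))
    {b : ℝ} (hb : F f < b) : ∀ᶠ k in atTop, F (g k) < b := by
  obtain ⟨δ, hFδ, hδ⟩ : ∃ δ : ℝ, F (f + δ • 1) < b ∧ 0 < δ := by
    have hcont := (hF.continuous_add_smul f 1).tendsto 0
    simp only [zero_smul, add_zero] at hcont
    have : ∀ᶠ δ in 𝓝[>] (0 : ℝ), F (f + δ • 1) < b ∧ 0 < δ :=
      ((hcont.eventually (gt_mem_nhds hb)).filter_mono nhdsWithin_le_nhds).and self_mem_nhdsWithin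
    exact this.exists
  obtain ⟨W, hW⟩ := exists_continuous_natCast_mul_sub_le hg hgf hδ
  have hlim : Tendsto (fun k : ℕ => F (f + δ • 1 + (k : ℝ)⁻¹ • W)) atTop (𝓝 (F (f + δ • 1))) := by
    have h := ((hF.continuous_add_smul (f + δ • 1) W).tendsto 0).comp
      (tendsto_inv_atTop_nhds_zero_nat (𝕜 := ℝ))
    rwa [zero_smul, add_zero] at h
  filter_upwards [hlim.eventually (gt_mem_nhds hFδ), eventually_gt_atTop 0] with k hk hk0
  refine (hF' fun x => ?_).trans_lt hk
  have hk0' : (0 : ℝ) < k := Nat.cast_pos.2 hk0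
  change g k x ≤ f x + δ * 1 + (k : ℝ)⁻¹ * W x
  rw [mul_one, inv_mul_eq_div, ← sub_le_iff_le_add', le_div_iff₀' hk0']
  linarith [hW k x]

end

theorem stmt19_general {X : Type*} [TopologicalSpace X]
    (F : C(X, ℝ) → ℝ) (hconv : ConvexOn ℝ Set.univ F) (hmono : Monotone F) :
    ∀ (f : C(X, ℝ)) (g : ℕ → C(X, ℝ)), Antitone g →
      (∀ x, Tendsto (fun n => g n x) atTop (𝓝 (f x))) →
      Tendsto (fun n => F (g n)) atTop (𝓝 (F f)) := by
  intro f g hg hgf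
  have f_le (k : ℕ) : f ≤ g k := fun x => Antitone.le_of_tendsto (fun _ _ h => hg h x) (hgf x) k
  exact tendsto_order.2 ⟨fun a ha => Eventually.of_forall fun k => ha.trans_le (hmono (f_le k)),
    fun b hb => hconv.eventually_lt_of_antitone hmono hg hgf hb⟩

/-- A convex nondecreasing `F : C(X) → ℝ` with `F 0 = 0`, defined on all
continuous real functions on a Polish space `X`, satisfies downward continuity:
`f_n ↓ f` pointwise (with `f_n, f ∈ C(X)`) implies `F(f_n) ↓ F(f)`. -/
theorem stmt19 {X : Type*} [TopologicalSpace X] [PolishSpace X]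
    (F : C(X, ℝ) → ℝ) (hconv : ConvexOn ℝ Set.univ F) (hmono : Monotone F)
    (hF0 : F 0 = 0) :
    ∀ (f : C(X, ℝ)) (g : ℕ → C(X, ℝ)), Antitone g →
      (∀ x, Tendsto (fun n => g n x) atTop (𝓝 (f x))) →
      Tendsto (fun n => F (g n)) atTop (𝓝 (F f)) :=
  stmt19_general F hconv hmono
end
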